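/- arXiv:1510.08830 — 3 statements merged into one kernel-verified Lean document; each statement's English description precedes it below -/
import Mathlib

section
/- For any integer sequences a = (a₁, a₂, …) with a_k ≥ 1 and b = (b₁, b₂, …) with b_i ≥ 3 for all i, the bubble group Γ_{a,b} has exponential volume growth: there exists c > 1 such that the ball of radius r in Γ_{a,b} with respect to the generating set {α^{±1}, β^{±1}} has cardinality at least c^r for all r ≥ 1. -/
open scoped Pointwise

namespace Paper

/-- A symmetric (discrete) probability measure on a group. -/
def IsSymmProb {G : Type*} [Group G] (φ : G → ℝ) : Prop :=
  (∀ g, 0 ≤ φ g) ∧ (∀ g, φ g⁻¹ = φ g) ∧ HasSum φ 1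

/-- The boundary weight `φ(∂Ω) = ∑_{x ∈ Ω} ∑_{y : xy ∉ Ω} φ(y)` of a finite set `Ω`. -/
noncomputable def boundaryWeight {G : Type*} [Group G] (φ : G → ℝ) (Ω : Finset G) : ℝ :=
  ∑ x ∈ Ω, ∑' y : G, Set.indicator {y | x * y ∉ Ω} φ y

/-- The `L¹`-isoperimetric profile
`Λ₁(v) = inf {|Ω|⁻¹ φ(∂Ω) : Ω finite nonempty, |Ω| ≤ v}`. -/
noncomputable def lambdaOne {G : Type*} [Group G] (φ : G → ℝ) (v : ℝ) : ℝ :=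
  sInf ((fun Ω : Finset G => (Ω.card : ℝ)⁻¹ * boundaryWeight φ Ω) ''
    {Ω : Finset G | Ω.Nonempty ∧ (Ω.card : ℝ) ≤ v})

/-- The Dirichlet form `E_φ(f,f) = (1/2) ∑_{x,y} |f(yx) - f(x)|² φ(y)`. -/
noncomputable def dirichletForm {G : Type*} [Group G] (φ : G → ℝ) (f : G → ℝ) : ℝ :=
  (1 / 2) * ∑' p : G × G, |f (p.2 * p.1) - f p.1| ^ 2 * φ p.2

/-- The `L²`-isoperimetric (spectral) profile. -/
noncomputable def lambdaTwo {G : Type*} [Group G] (φ : G → ℝ) (v : ℝ) : ℝ :=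
  sInf ((fun f : G → ℝ => dirichletForm φ f) ''
    {f : G → ℝ | (Function.support f).Finite ∧ ((Function.support f).ncard : ℝ) ≤ v ∧
      (∑' x : G, f x ^ 2) = 1})

/-- Ball of radius `r` for the word metric associated with a (symmetric) set `S`. -/
def wordBall {G : Type*} [Group G] (S : Set G) (r : ℕ) : Set G :=
  {g | ∃ L : List G, (∀ x ∈ L, x ∈ S) ∧ L.length ≤ r ∧ L.prod = g}

/-- Word length of `g` with respect to the set `S`. -/
noncomputable def wordLength {G : Type*} [Group G] (S : Set G) (g : G) : ℕ :=
  sInf {n : ℕ | g ∈ wordBall S n}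

/-- Ball of radius `r` about `o` in the Schreier graph of the action of `Γ` on `X`
with edges given by the set `S`. -/
def schreierBall {Γ : Type*} {X : Type*} [Group Γ] [MulAction Γ X] (S : Set Γ) (o : X)
    (r : ℕ) : Set X :=
  {y | ∃ L : List Γ, (∀ g ∈ L, g ∈ S) ∧ L.length ≤ r ∧ L.prod • o = y}

/-- The inverted orbit `𝒪(w; x) = {w₁⋯w_l·x, w₁⋯w_{l-1}·x, …, w₁·x, x}` of `x` under the
word given by the list `L = [w₁, …, w_l]`. -/
def invertedOrbit {Γ : Type*} {X : Type*} [Group Γ] [MulAction Γ X] (L : List Γ) (x : X) :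
    Set X :=
  {y | ∃ j ≤ L.length, (L.take j).prod • x = y}

/-- Uniform probability measure on a set. -/
noncomputable def unifOn {G : Type*} (A : Set G) : G → ℝ :=
  A.indicator fun _ => (A.ncard : ℝ)⁻¹

open Classical in
/-- Amenability of a (discrete) group, via the Følner condition. -/
def IsAmenable (G : Type*) [Group G] : Prop :=
  ∀ (T : Finset G) (ε : ℝ), 0 < ε → ∃ F : Finset G, F.Nonempty ∧
    ∀ s ∈ T, (((F.image fun g => s * g) \ F).card : ℝ) ≤ ε * F.card

open Classical in
/-- `n`-fold convolution power of a measure on a discrete group. -/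
noncomputable def convPow {G : Type*} [Group G] (μ : G → ℝ) : ℕ → G → ℝ
  | 0 => fun g => if g = 1 then 1 else 0
  | n + 1 => fun g => ∑' h : G, μ h * convPow μ n (h⁻¹ * g)

section Wreath

/-- The restricted direct product `⊕_{x ∈ X} H`, as a subgroup of `X → H`. -/
def Lamps (X : Type*) (H : Type*) [Group H] : Subgroup (X → H) where
  carrier := {f | (Function.mulSupport f).Finite}
  one_mem' := by
    have h : Function.mulSupport (1 : X → H) = ∅ := Function.mulSupport_one
    simp only [Set.mem_setOf_eq, h]
    exact Set.finite_empty
  mul_mem' := by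
    intro f g hf hg
    exact Set.Finite.subset (Set.Finite.union hf hg) (Function.mulSupport_mul f g)
  inv_mem' := by
    intro f hf
    show (Function.mulSupport f⁻¹).Finite
    have h : Function.mulSupport f⁻¹ = Function.mulSupport f := by
      ext x
      simp [Function.mem_mulSupport]
    rw [h]
    exact hf

variable (Γ : Type*) [Group Γ] (X : Type*) [MulAction Γ X] (H : Type*) [Group H]

/-- The coordinate-permutation automorphism `(g·f)(x) = f(g⁻¹·x)` of `⊕_{x ∈ X} H`. -/
def lampShift (γ : Γ) : Lamps X H ≃* Lamps X H where
  toFun f := ⟨fun x => (f : X → H) (γ⁻¹ • x), by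
    have hf : (Function.mulSupport (f : X → H)).Finite := f.2
    refine Set.Finite.subset (hf.image fun x => γ • x) ?_
    intro x hx
    exact ⟨γ⁻¹ • x, hx, smul_inv_smul γ x⟩⟩
  invFun f := ⟨fun x => (f : X → H) (γ • x), by
    have hf : (Function.mulSupport (f : X → H)).Finite := f.2
    refine Set.Finite.subset (hf.image fun x => γ⁻¹ • x) ?_
    intro x hx
    exact ⟨γ • x, hx, inv_smul_smul γ x⟩⟩
  left_inv f := Subtype.ext <| funext fun x => by simp
  right_inv f := Subtype.ext <| funext fun x => by simp
  map_mul' f g := rfl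

/-- The permutation action of `Γ` on lamp configurations, as a homomorphism to `MulAut`. -/
def wreathAction : Γ →* MulAut (Lamps X H) where
  toFun γ := lampShift Γ X H γ
  map_one' := by
    refine MulEquiv.ext fun f => Subtype.ext <| funext fun x => ?_
    show (f : X → H) ((1 : Γ)⁻¹ • x) = (f : X → H) x
    simp
  map_mul' γ₁ γ₂ := by
    refine MulEquiv.ext fun f => Subtype.ext <| funext fun x => ?_
    show (f : X → H) ((γ₁ * γ₂)⁻¹ • x) = (f : X → H) (γ₂⁻¹ • γ₁⁻¹ • x)
    rw [mul_inv_rev, mul_smul]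

/-- The permutation wreath product `H ≀_X Γ = (⊕_{x ∈ X} H) ⋊ Γ`. -/
abbrev PWreath := SemidirectProduct (Lamps X H) Γ (wreathAction Γ X H)

/-- The action of the wreath product on the base space (through `Γ`). -/
instance pwreathBaseAction : MulAction (PWreath Γ X H) X where
  smul g x := g.right • x
  one_smul x := by
    show (1 : PWreath Γ X H).right • x = x
    rw [SemidirectProduct.one_right, one_smul]
  mul_smul g₁ g₂ x := by
    show (g₁ * g₂).right • x = g₁.right • g₂.right • x
    rw [SemidirectProduct.mul_right g₁ g₂, mul_smul]

open Classical in
/-- The lamp configuration equal to `h` at `x₀` and trivial elsewhere. -/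
noncomputable def lampAt (X : Type*) (H : Type*) [Group H] (x₀ : X) (h : H) : Lamps X H :=
  ⟨fun x => if x = x₀ then h else 1, by
    refine Set.Finite.subset (Set.finite_singleton x₀) ?_
    intro x hx
    by_contra hne
    simp only [Set.mem_singleton_iff] at hne
    exact hx (if_neg hne)⟩

/-- The two lamp generators `(±1₁^o, e)` of `ℤ ≀_X Γ`. -/
noncomputable def lampGenSet (o : X) : Set (PWreath Γ X (Multiplicative ℤ)) :=
  {SemidirectProduct.inl (lampAt X (Multiplicative ℤ) o (Multiplicative.ofAdd 1)),
   SemidirectProduct.inl (lampAt X (Multiplicative ℤ) o (Multiplicative.ofAdd (-1)))}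

/-- The switch-or-walk measure `𝔮 = (1/2)(η + μ)` on `ℤ ≀_X Γ`, `η` uniform on
`{(±1₁^o, e)}` and `μ` uniform on the generating set `S` of `Γ`. -/
noncomputable def switchOrWalk (o : X) (S : Set Γ) :
    PWreath Γ X (Multiplicative ℤ) → ℝ := fun g =>
  (1 / 2) * unifOn (lampGenSet Γ X o) g +
  (1 / 2) * unifOn ((fun γ : Γ =>
    (SemidirectProduct.inr γ : PWreath Γ X (Multiplicative ℤ))) '' S) g

/-- The switch-or-walk generating set `{(±1₁^o, e)} ∪ S` of `ℤ ≀_X Γ`. -/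
noncomputable def swGenSet (o : X) (S : Set Γ) : Set (PWreath Γ X (Multiplicative ℤ)) :=
  lampGenSet Γ X o ∪
    (fun γ : Γ => (SemidirectProduct.inr γ : PWreath Γ X (Multiplicative ℤ))) '' S

open Classical in
/-- A `(J,B)`-admissible function on the finite subsets of `X`: there is `A ⊆ X` such that
every `Y` in the support of `F` has the form `Y = g·A` with `J ⊆ Y ⊆ B`. -/
def Admissible {Γ : Type*} [Group Γ] {X : Type*} [MulAction Γ X] (J B : Finset X)
    (F : Finset X → ℝ) : Prop :=
  ∃ A : Finset X, ∀ Y : Finset X, F Y ≠ 0 →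
    (∃ g : Γ, Y = A.image fun x => g • x) ∧ J ⊆ Y ∧ Y ⊆ B

/-- The set `Ω(J,B)` of words (in the letters of `S`) all of whose inverted orbits
starting from points of `J` stay in `B`. -/
def OmegaSet {Γ : Type*} [Group Γ] {X : Type*} [MulAction Γ X] (S : Set Γ)
    (J B : Finset X) : Set (List Γ) :=
  {L | (∀ g ∈ L, g ∈ S) ∧ ∀ x ∈ J, invertedOrbit L x ⊆ (B : Set X)}

end Wreath

section Letters

/-- The four letters `α, α⁻¹, β, β⁻¹`. -/
inductive GLetter : Type
  | A | A' | B | B'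

/-- Formal inverse of a letter. -/
def GLetter.inv : GLetter → GLetter
  | .A => .A'
  | .A' => .A
  | .B => .B'
  | .B' => .B

/-- Action of a letter, given the four functions realizing `α, α⁻¹, β, β⁻¹`. -/
def GLetter.apply {V : Type*} (fA fA' fB fB' : V → V) : GLetter → V → V
  | .A => fA
  | .A' => fA'
  | .B => fB
  | .B' => fB'

/-- `wordApply [γ₁, …, γ_p] x = γ₁·(γ₂·( … (γ_p·x)))`. -/
def wordApply {V : Type*} (fA fA' fB fB' : V → V) (L : List GLetter) (x : V) : V :=
  L.foldr (fun γ y => γ.apply fA fA' fB fB' y) x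

end Letters

section NeumannSegal

/-!  Cyclic Neumann–Segal groups.  The group acts (faithfully) on the boundary of the
spherically homogeneous rooted tree with level-`i` alphabet `{0, …, l i - 1}` (`i ≥ 1`);
a boundary point is the sequence of its letters, the letter at (paper) level `i + 1`
being coordinate `i`. -/

/-- Boundary of the rooted tree with level-`i` alphabet of size `l i`, `i ≥ 1`. -/
def NSSpace (l : ℕ → ℕ) : Type := ∀ i : ℕ, ZMod (l (i + 1))

/-- The rooted automorphism `α`: adds `1` to the first letter. -/
noncomputable def nsAlpha (l : ℕ → ℕ) : NSSpace l → NSSpace l :=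
  fun w => Function.update w 0 (w 0 + 1)

/-- Inverse of `α`. -/
noncomputable def nsAlphaInv (l : ℕ → ℕ) : NSSpace l → NSSpace l :=
  fun w => Function.update w 0 (w 0 - 1)

open Classical in
/-- The directed automorphism `β`: along the ray `0^∞`, at the first nonzero letter `x_j`,
if `x_j = l_j/2` then it applies `α` to the remaining suffix (i.e. adds `1` to the next
letter), and otherwise acts trivially. -/
noncomputable def nsBeta (l : ℕ → ℕ) : NSSpace l → NSSpace l := fun w =>
  if h : ∃ j, w j ≠ 0 then
    let j := Nat.find h
    if w j = ((l (j + 1) / 2 : ℕ) : ZMod (l (j + 1))) then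
      Function.update w (j + 1) (w (j + 1) + 1)
    else w
  else w

open Classical in
/-- Inverse of `β`. -/
noncomputable def nsBetaInv (l : ℕ → ℕ) : NSSpace l → NSSpace l := fun w =>
  if h : ∃ j, w j ≠ 0 then
    let j := Nat.find h
    if w j = ((l (j + 1) / 2 : ℕ) : ZMod (l (j + 1))) then
      Function.update w (j + 1) (w (j + 1) - 1)
    else w
  else w

/-- The generators `α^{±1}, β^{±1}` of the cyclic Neumann–Segal group, as permutations of
the boundary. -/
noncomputable def nsGens (l : ℕ → ℕ) : Set (Equiv.Perm (NSSpace l)) :=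
  {π | ⇑π = nsAlpha l ∨ ⇑π = nsBeta l ∨ ⇑π⁻¹ = nsAlpha l ∨ ⇑π⁻¹ = nsBeta l}

/-- The cyclic Neumann–Segal group `Γ = ⟨α, β⟩`. -/
noncomputable def NSGroup (l : ℕ → ℕ) : Subgroup (Equiv.Perm (NSSpace l)) :=
  Subgroup.closure (nsGens l)

/-- The generators, as elements of the Neumann–Segal group. -/
noncomputable def nsGenSub (l : ℕ → ℕ) : Set (NSGroup l) :=
  {γ | (γ : Equiv.Perm (NSSpace l)) ∈ nsGens l}

/-- The ray `o = 0^∞`. -/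
def nsO (l : ℕ → ℕ) : NSSpace l := fun _ => 0

/-- The basepoint `0^∞` of the orbital Schreier graph `𝒮`, as a point of the orbit. -/
noncomputable def nsOrbitPt (l : ℕ → ℕ) : MulAction.orbit (NSGroup l) (nsO l) :=
  ⟨nsO l, MulAction.mem_orbit_self _⟩

/-- The permutation wreath product `ℤ ≀_𝒮 Γ` over the orbital Schreier graph `𝒮` of `0^∞`. -/
noncomputable abbrev NSWreath (l : ℕ → ℕ) :=
  PWreath (NSGroup l) (MulAction.orbit (NSGroup l) (nsO l)) (Multiplicative ℤ)

/-- The switch-or-walk measure on `ℤ ≀_𝒮 Γ`. -/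
noncomputable def nsSW (l : ℕ → ℕ) : NSWreath l → ℝ :=
  switchOrWalk (NSGroup l) (MulAction.orbit (NSGroup l) (nsO l)) (nsOrbitPt l) (nsGenSub l)

/-- Vertices of level `n` of the rooted tree. -/
def NSLevel (l : ℕ → ℕ) (n : ℕ) : Type := ∀ i : Fin n, ZMod (l (i.1 + 1))

/-- Extension of a level-`n` vertex to a boundary point, by zeros. -/
noncomputable def nsPad (l : ℕ → ℕ) {n : ℕ} (w : NSLevel l n) : NSSpace l :=
  fun i => if h : i < n then w ⟨i, h⟩ else 0

/-- Truncation of a boundary point to level `n`. -/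
def nsTrunc (l : ℕ → ℕ) (n : ℕ) (x : NSSpace l) : NSLevel l n := fun i => x i.1

/-- Action of a generator letter on level-`n` vertices. -/
noncomputable def nsLevelApply (l : ℕ → ℕ) (n : ℕ) (γ : GLetter) (w : NSLevel l n) :
    NSLevel l n :=
  nsTrunc l n (GLetter.apply (nsAlpha l) (nsAlphaInv l) (nsBeta l) (nsBetaInv l) γ
    (nsPad l w))

/-- The vertex `u_n = 0^n`. -/
def nsLevelO (l : ℕ → ℕ) (n : ℕ) : NSLevel l n := fun _ => 0

/-- Ball of radius `r` about `u_n = 0^n` in the orbital Schreier graph `𝒮_n` of `u_n`. -/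
noncomputable def nsLevelBall (l : ℕ → ℕ) (n r : ℕ) : Set (NSLevel l n) :=
  {y | ∃ L : List GLetter, L.length ≤ r ∧
    L.foldr (fun γ z => nsLevelApply l n γ z) (nsLevelO l n) = y}

end NeumannSegal

section Bubble

/-!  Bubble groups.  A vertex of the bubble graph is a pair `(w, u)` where `w` is a word
whose letter at position `i` lies in the branching alphabet `{1, …, b i - 1}` (encoded as
`ZMod (b i - 1)`, the letter `z` being encoded as `z - 1`) and `u ∈ ZMod (2 * a k)`
(`k = |w|`) is a position on the bubble (cycle) of length `2 * a k` indexed by `w`. -/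

/-- Vertex set of the bubble graph `X_{a,b}`. -/
def BubbleVert (a b : ℕ → ℕ) : Type :=
  Σ k : ℕ, ((i : Fin k) → ZMod (b i.1 - 1)) × ZMod (2 * a k)

/-- `α` rotates every bubble: it advances the position `u` by one. -/
noncomputable def bubAlpha (a b : ℕ → ℕ) : BubbleVert a b → BubbleVert a b :=
  fun v => ⟨v.1, v.2.1, v.2.2 + 1⟩

/-- Inverse of `α`. -/
noncomputable def bubAlphaInv (a b : ℕ → ℕ) : BubbleVert a b → BubbleVert a b :=
  fun v => ⟨v.1, v.2.1, v.2.2 - 1⟩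

/-- `β` rotates every branching cycle
`(w, a_k) → (w·1, 0) → (w·2, 0) → ⋯ → (w·(b_k - 1), 0) → (w, a_k)`,
and fixes all other vertices (self-loops). -/
noncomputable def bubBeta (a b : ℕ → ℕ) : BubbleVert a b → BubbleVert a b
  | ⟨0, w, u⟩ =>
      if u = ((a 0 : ℕ) : ZMod (2 * a 0)) ∧ u ≠ 0 then ⟨1, Fin.snoc w 0, 0⟩
      else ⟨0, w, u⟩
  | ⟨k + 1, w, u⟩ =>
      if u = ((a (k + 1) : ℕ) : ZMod (2 * a (k + 1))) ∧ u ≠ 0 then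
        ⟨k + 2, Fin.snoc w 0, 0⟩
      else if u = 0 then
        (if w (Fin.last k) = ((b k - 2 : ℕ) : ZMod (b k - 1)) then
          ⟨k, Fin.init w, ((a k : ℕ) : ZMod (2 * a k))⟩
        else
          ⟨k + 1, Function.update w (Fin.last k) (w (Fin.last k) + 1), u⟩)
      else ⟨k + 1, w, u⟩

/-- Inverse of `β`. -/
noncomputable def bubBetaInv (a b : ℕ → ℕ) : BubbleVert a b → BubbleVert a b
  | ⟨0, w, u⟩ =>
      if u = ((a 0 : ℕ) : ZMod (2 * a 0)) ∧ u ≠ 0 then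
        ⟨1, Fin.snoc w ((b 0 - 2 : ℕ) : ZMod (b 0 - 1)), 0⟩
      else ⟨0, w, u⟩
  | ⟨k + 1, w, u⟩ =>
      if u = ((a (k + 1) : ℕ) : ZMod (2 * a (k + 1))) ∧ u ≠ 0 then
        ⟨k + 2, Fin.snoc w ((b (k + 1) - 2 : ℕ) : ZMod (b (k + 1) - 1)), 0⟩
      else if u = 0 then
        (if w (Fin.last k) = 0 then
          ⟨k, Fin.init w, ((a k : ℕ) : ZMod (2 * a k))⟩
        else
          ⟨k + 1, Function.update w (Fin.last k) (w (Fin.last k) - 1), u⟩)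
      else ⟨k + 1, w, u⟩

/-- The generators `α^{±1}, β^{±1}`, as permutations of the bubble graph. -/
noncomputable def bubGens (a b : ℕ → ℕ) : Set (Equiv.Perm (BubbleVert a b)) :=
  {π | ⇑π = bubAlpha a b ∨ ⇑π = bubBeta a b ∨ ⇑π⁻¹ = bubAlpha a b ∨ ⇑π⁻¹ = bubBeta a b}

/-- The bubble group `Γ_{a,b} = ⟨α, β⟩`. -/
noncomputable def BubbleGroup (a b : ℕ → ℕ) : Subgroup (Equiv.Perm (BubbleVert a b)) :=
  Subgroup.closure (bubGens a b)

/-- The generators, as elements of the bubble group. -/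
noncomputable def bubGenSub (a b : ℕ → ℕ) : Set (BubbleGroup a b) :=
  {γ | (γ : Equiv.Perm (BubbleVert a b)) ∈ bubGens a b}

/-- The root `o` of the bubble graph. -/
def bubRoot (a b : ℕ → ℕ) : BubbleVert a b := ⟨0, fun i => i.elim0, 0⟩

/-- The midpoint `𝔪_k = (1^k, ⌊a_k/2⌋)` on the bubble indexed by the word `1^k`. -/
def bubM (a b : ℕ → ℕ) (k : ℕ) : BubbleVert a b :=
  ⟨k, fun _ => 0, ((a k / 2 : ℕ) : ZMod (2 * a k))⟩

/-- Application of a word of letters to a vertex of the bubble graph. -/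
noncomputable def bubApply (a b : ℕ → ℕ) (L : List GLetter) (x : BubbleVert a b) :
    BubbleVert a b :=
  wordApply (bubAlpha a b) (bubAlphaInv a b) (bubBeta a b) (bubBetaInv a b) L x

/-- Ball of radius `r` about `x` in the bubble graph. -/
noncomputable def bubBall (a b : ℕ → ℕ) (x : BubbleVert a b) (r : ℕ) :
    Set (BubbleVert a b) :=
  {y | ∃ L : List GLetter, L.length ≤ r ∧ bubApply a b L x = y}

/-- Inverted orbit of `x` under a word of letters. -/
noncomputable def bubInvOrbit (a b : ℕ → ℕ) (L : List GLetter) (x : BubbleVert a b) :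
    Set (BubbleVert a b) :=
  {y | ∃ j ≤ L.length, bubApply a b (L.take j) x = y}

/-- `α^s` for `s : ℤ`. -/
noncomputable def bubAlphaZPow (a b : ℕ → ℕ) (s : ℤ) (x : BubbleVert a b) :
    BubbleVert a b :=
  if 0 ≤ s then (bubAlpha a b)^[s.toNat] x else (bubAlphaInv a b)^[(-s).toNat] x

/-- Number of vertices in the first `j` levels of the bubble graph (words of length `< j`). -/
def bubLevelCard (a b : ℕ → ℕ) (j : ℕ) : ℕ :=
  ∑ m ∈ Finset.range j, (∏ i ∈ Finset.range m, (b i - 1)) * (2 * a m)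

end Bubble

end Paper

open Paper

open Paper

namespace BubbleProof
variable {a b : ℕ → ℕ}

abbrev BV (a b : ℕ → ℕ) := Σ k : ℕ, ((i : Fin k) → ZMod (b i.1 - 1)) × ZMod (2 * a k)

lemma cast_val (ha : ∀ k, 1 ≤ a k) {k j : ℕ} (hj : j ≤ a k) :
    ((j : ZMod (2 * a k))).val = j := by
  haveI : NeZero (2 * a k) := ⟨by have := ha k; omega⟩
  exact ZMod.val_cast_of_lt (by have := ha k; omega)

lemma acast_ne_zero (ha : ∀ k, 1 ≤ a k) (k : ℕ) :
    ((a k : ℕ) : ZMod (2 * a k)) ≠ 0 := by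
  intro h
  have h1 := cast_val (a := a) ha (le_refl (a k))
  rw [h] at h1
  simp at h1
  have := ha k; omega

lemma letter_cast_eq_neg_one (hb : ∀ i, 3 ≤ b i) (k : ℕ) :
    ((b k - 2 : ℕ) : ZMod (b k - 1)) = -1 := by
  have h3 := hb k
  have h : ((b k - 2 : ℕ) : ZMod (b k - 1)) + 1 = 0 := by
    have e : ((b k - 2 : ℕ) : ZMod (b k - 1)) + 1 = ((b k - 1 : ℕ) : ZMod (b k - 1)) := by
      push_cast [show b k - 1 = (b k - 2) + 1 by omega]; ring
    rw [e, ZMod.natCast_self]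
  linear_combination h

lemma bubBeta_zero (w : (i : Fin 0) → ZMod (b i.1 - 1)) (u : ZMod (2 * a 0)) :
    bubBeta a b ⟨0, w, u⟩ =
      ((if u = ((a 0 : ℕ) : ZMod (2 * a 0)) ∧ u ≠ 0 then ⟨1, Fin.snoc w 0, 0⟩
       else ⟨0, w, u⟩ : BV a b)) := rfl

lemma bubBeta_succ (k : ℕ) (w : (i : Fin (k+1)) → ZMod (b i.1 - 1)) (u : ZMod (2 * a (k+1))) :
    bubBeta a b ⟨k+1, w, u⟩ =
      ((if u = ((a (k + 1) : ℕ) : ZMod (2 * a (k + 1))) ∧ u ≠ 0 then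
        ⟨k + 2, Fin.snoc w 0, 0⟩
      else if u = 0 then
        (if w (Fin.last k) = ((b k - 2 : ℕ) : ZMod (b k - 1)) then
          ⟨k, Fin.init w, ((a k : ℕ) : ZMod (2 * a k))⟩
        else
          ⟨k + 1, Function.update w (Fin.last k) (w (Fin.last k) + 1), u⟩)
      else ⟨k + 1, w, u⟩ : BV a b)) := rfl

lemma bubBetaInv_zero (w : (i : Fin 0) → ZMod (b i.1 - 1)) (u : ZMod (2 * a 0)) :
    bubBetaInv a b ⟨0, w, u⟩ =
      ((if u = ((a 0 : ℕ) : ZMod (2 * a 0)) ∧ u ≠ 0 then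
        ⟨1, Fin.snoc w ((b 0 - 2 : ℕ) : ZMod (b 0 - 1)), 0⟩
       else ⟨0, w, u⟩ : BV a b)) := rfl

lemma bubBetaInv_succ (k : ℕ) (w : (i : Fin (k+1)) → ZMod (b i.1 - 1))
    (u : ZMod (2 * a (k+1))) :
    bubBetaInv a b ⟨k+1, w, u⟩ =
      ((if u = ((a (k + 1) : ℕ) : ZMod (2 * a (k + 1))) ∧ u ≠ 0 then
        ⟨k + 2, Fin.snoc w ((b (k + 1) - 2 : ℕ) : ZMod (b (k + 1) - 1)), 0⟩
      else if u = 0 then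
        (if w (Fin.last k) = 0 then
          ⟨k, Fin.init w, ((a k : ℕ) : ZMod (2 * a k))⟩
        else
          ⟨k + 1, Function.update w (Fin.last k) (w (Fin.last k) - 1), u⟩)
      else ⟨k + 1, w, u⟩ : BV a b)) := rfl

/-- `β⁻¹ ∘ β = id`. -/
lemma betaInv_beta (ha : ∀ k, 1 ≤ a k) (hb : ∀ i, 3 ≤ b i) (v : BubbleVert a b) :
    bubBetaInv a b (bubBeta a b v) = v := by
  obtain ⟨k, w, u⟩ := v
  cases k with
  | zero =>
    rw [bubBeta_zero]
    by_cases h : u = ((a 0 : ℕ) : ZMod (2 * a 0)) ∧ u ≠ 0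
    · erw [if_pos h, bubBetaInv_succ]
      rw [if_neg (by simp), if_pos rfl, if_pos (Fin.snoc_last _ _), Fin.init_snoc]
      exact congrArg _ (congrArg _ h.1.symm)
    · erw [if_neg h, bubBetaInv_zero, if_neg h]
  | succ k =>
    rw [bubBeta_succ]
    by_cases h1 : u = ((a (k+1) : ℕ) : ZMod (2 * a (k+1))) ∧ u ≠ 0
    · erw [if_pos h1, bubBetaInv_succ]
      rw [if_neg (by simp), if_pos rfl, if_pos (Fin.snoc_last _ _), Fin.init_snoc]
      exact congrArg _ (congrArg _ h1.1.symm)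
    · erw [if_neg h1]
      by_cases h2 : u = 0
      · rw [if_pos h2]
        by_cases h3 : w (Fin.last k) = ((b k - 2 : ℕ) : ZMod (b k - 1))
        · rw [if_pos h3]
          subst h2
          cases k with
          | zero =>
            rw [bubBetaInv_zero, if_pos ⟨rfl, acast_ne_zero ha 0⟩, ← h3,
              Fin.snoc_init_self]
          | succ m =>
            rw [bubBetaInv_succ, if_pos ⟨rfl, acast_ne_zero ha (m+1)⟩, ← h3,
              Fin.snoc_init_self]
        · rw [if_neg h3]
          subst h2
          rw [bubBetaInv_succ, if_neg (by simp), if_pos rfl]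
          rw [if_neg (by
            rw [Function.update_self]
            intro hc
            apply h3
            rw [letter_cast_eq_neg_one hb k]
            linear_combination hc)]
          have hw : Function.update (Function.update w (Fin.last k) (w (Fin.last k) + 1))
              (Fin.last k) (w (Fin.last k) + 1 - 1) = w := by
            funext i
            by_cases hi : i = Fin.last k
            · subst hi; simp
            · rw [Function.update_of_ne hi, Function.update_of_ne hi]
          rw [Function.update_self, hw]
      · rw [if_neg h2, bubBetaInv_succ, if_neg h1, if_neg h2]

/-- `β ∘ β⁻¹ = id`. -/
lemma beta_betaInv (ha : ∀ k, 1 ≤ a k) (hb : ∀ i, 3 ≤ b i) (v : BubbleVert a b) :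
    bubBeta a b (bubBetaInv a b v) = v := by
  obtain ⟨k, w, u⟩ := v
  cases k with
  | zero =>
    rw [bubBetaInv_zero]
    by_cases h : u = ((a 0 : ℕ) : ZMod (2 * a 0)) ∧ u ≠ 0
    · erw [if_pos h, bubBeta_succ]
      rw [if_neg (by simp), if_pos rfl, if_pos (Fin.snoc_last _ _), Fin.init_snoc]
      exact congrArg _ (congrArg _ h.1.symm)
    · erw [if_neg h, bubBeta_zero, if_neg h]
  | succ k =>
    rw [bubBetaInv_succ]
    by_cases h1 : u = ((a (k+1) : ℕ) : ZMod (2 * a (k+1))) ∧ u ≠ 0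
    · erw [if_pos h1, bubBeta_succ]
      rw [if_neg (by simp), if_pos rfl, if_pos (Fin.snoc_last _ _), Fin.init_snoc]
      exact congrArg _ (congrArg _ h1.1.symm)
    · erw [if_neg h1]
      by_cases h2 : u = 0
      · rw [if_pos h2]
        by_cases h3 : w (Fin.last k) = 0
        · rw [if_pos h3]
          subst h2
          cases k with
          | zero =>
            rw [bubBeta_zero, if_pos ⟨rfl, acast_ne_zero ha 0⟩, ← h3,
              Fin.snoc_init_self]
          | succ m =>
            rw [bubBeta_succ, if_pos ⟨rfl, acast_ne_zero ha (m+1)⟩, ← h3,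
              Fin.snoc_init_self]
        · rw [if_neg h3]
          subst h2
          rw [bubBeta_succ, if_neg (by simp), if_pos rfl]
          rw [if_neg (by
            rw [Function.update_self, letter_cast_eq_neg_one hb k]
            intro hc
            apply h3
            linear_combination hc)]
          have hw : Function.update (Function.update w (Fin.last k) (w (Fin.last k) - 1))
              (Fin.last k) (w (Fin.last k) - 1 + 1) = w := by
            funext i
            by_cases hi : i = Fin.last k
            · subst hi; simp
            · rw [Function.update_of_ne hi, Function.update_of_ne hi]
          rw [Function.update_self, hw]
      · rw [if_neg h2, bubBeta_succ, if_neg h1, if_neg h2]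

/-- The permutation `α`. -/
noncomputable def permAlpha (a b : ℕ → ℕ) : Equiv.Perm (BubbleVert a b) where
  toFun := bubAlpha a b
  invFun := bubAlphaInv a b
  left_inv := by intro ⟨k, w, u⟩; simp [bubAlpha, bubAlphaInv]; exact congrArg (Sigma.mk k) (congrArg (Prod.mk w) (add_sub_cancel_right u 1))
  right_inv := by intro ⟨k, w, u⟩; simp [bubAlpha, bubAlphaInv]; exact congrArg (Sigma.mk k) (congrArg (Prod.mk w) (sub_add_cancel u 1))

/-- The permutation `β`. -/
noncomputable def permBeta (ha : ∀ k, 1 ≤ a k) (hb : ∀ i, 3 ≤ b i) : Equiv.Perm (BubbleVert a b) where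
  toFun := bubBeta a b
  invFun := bubBetaInv a b
  left_inv := betaInv_beta ha hb
  right_inv := beta_betaInv ha hb

lemma permAlpha_mem : permAlpha a b ∈ bubGens a b := Or.inl rfl

lemma permBeta_mem (ha : ∀ k, 1 ≤ a k) (hb : ∀ i, 3 ≤ b i) :
    permBeta ha hb ∈ bubGens a b := Or.inr (Or.inl rfl)

lemma permBetaInv_mem (ha : ∀ k, 1 ≤ a k) (hb : ∀ i, 3 ≤ b i) :
    (permBeta ha hb)⁻¹ ∈ bubGens a b := by
  refine Or.inr (Or.inr (Or.inr ?_))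
  rw [inv_inv]
  rfl

section States

/-- Abstract good states: level, letters (total function), integer position. -/
abbrev St (b : ℕ → ℕ) := ℕ × ((i : ℕ) → ZMod (b i - 1)) × ℕ

variable (a b) in
/-- Realization of a state as a vertex. -/
def pt (σ : St b) : BubbleVert a b :=
  ⟨σ.1, fun i : Fin σ.1 => σ.2.1 i.1, (σ.2.2 : ZMod (2 * a σ.1))⟩

variable (a b) in
/-- One block `α ∘ β^{±1}` on abstract states. -/
def stepSt (δ : Bool) (σ : St b) : St b :=
  if σ.2.2 < a σ.1 then (σ.1, σ.2.1, σ.2.2 + 1)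
  else (σ.1 + 1,
    Function.update σ.2.1 σ.1
      (if δ then (0 : ZMod (b σ.1 - 1)) else ((b σ.1 - 2 : ℕ) : ZMod (b σ.1 - 1))), 1)

variable (a) in
/-- The good-state invariant. -/
def InvSt (σ : St b) : Prop := 1 ≤ σ.2.2 ∧ σ.2.2 ≤ a σ.1

lemma invSt_step (ha : ∀ k, 1 ≤ a k) {σ : St b} (h : InvSt a σ) (δ : Bool) :
    InvSt a (stepSt a b δ σ) := by
  obtain ⟨k, w, j⟩ := σ
  obtain ⟨h1, h2⟩ := h
  dsimp only [InvSt, stepSt] at *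
  by_cases hj : j < a k
  · rw [if_pos hj]; exact ⟨Nat.succ_le_succ (Nat.zero_le _), hj⟩
  · rw [if_neg hj]; exact ⟨le_refl 1, ha (k+1)⟩

end States
section Dynamics

lemma cast_ne_zero' (ha : ∀ k, 1 ≤ a k) {k j : ℕ} (h1 : 1 ≤ j) (hj : j ≤ a k) :
    (j : ZMod (2 * a k)) ≠ 0 := by
  intro h
  have h2 := cast_val (a := a) ha hj
  rw [h] at h2
  simp at h2
  omega

lemma cast_ne_acast (ha : ∀ k, 1 ≤ a k) {k j : ℕ} (hj : j < a k) :
    (j : ZMod (2 * a k)) ≠ ((a k : ℕ) : ZMod (2 * a k)) := by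
  intro h
  have h2 := cast_val (a := a) ha hj.le
  rw [h, cast_val (a := a) ha (le_refl _)] at h2
  omega

/-- `β` and `β⁻¹` fix interior points. -/
lemma beta_drift (ha : ∀ k, 1 ≤ a k) {k : ℕ} {w : (i : Fin k) → ZMod (b i.1 - 1)}
    {j : ℕ} (h1 : 1 ≤ j) (h2 : j < a k) :
    bubBeta a b ⟨k, w, (j : ZMod (2 * a k))⟩ = ⟨k, w, (j : ZMod (2 * a k))⟩ ∧
    bubBetaInv a b ⟨k, w, (j : ZMod (2 * a k))⟩ = ⟨k, w, (j : ZMod (2 * a k))⟩ := by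
  cases k with
  | zero =>
    rw [bubBeta_zero, bubBetaInv_zero]
    constructor <;>
      exact if_neg (fun hc => cast_ne_acast ha h2 hc.1)
  | succ k =>
    rw [bubBeta_succ, bubBetaInv_succ]
    constructor <;>
    · erw [if_neg (fun hc => cast_ne_acast ha h2 hc.1)]
      exact if_neg (cast_ne_zero' ha h1 h2.le)

/-- `β` and `β⁻¹` descend at the junction. -/
lemma beta_junction (ha : ∀ k, 1 ≤ a k) {k : ℕ} {w : (i : Fin k) → ZMod (b i.1 - 1)} :
    bubBeta a b ⟨k, w, ((a k : ℕ) : ZMod (2 * a k))⟩ = ⟨k + 1, Fin.snoc w 0, 0⟩ ∧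
    bubBetaInv a b ⟨k, w, ((a k : ℕ) : ZMod (2 * a k))⟩ =
      ⟨k + 1, Fin.snoc w ((b k - 2 : ℕ) : ZMod (b k - 1)), 0⟩ := by
  cases k with
  | zero =>
    rw [bubBeta_zero, bubBetaInv_zero]
    exact ⟨if_pos ⟨rfl, acast_ne_zero ha 0⟩, if_pos ⟨rfl, acast_ne_zero ha 0⟩⟩
  | succ k =>
    rw [bubBeta_succ, bubBetaInv_succ]
    exact ⟨if_pos ⟨rfl, acast_ne_zero ha _⟩, if_pos ⟨rfl, acast_ne_zero ha _⟩⟩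

/-- Restriction of an updated total letter function is a `snoc`. -/
lemma restrict_update (w : (i : ℕ) → ZMod (b i - 1)) (k : ℕ) (c : ZMod (b k - 1)) :
    (fun i : Fin (k+1) => Function.update w k c i.1) =
      Fin.snoc (fun i : Fin k => w i.1) c := by
  funext i
  refine Fin.lastCases ?_ ?_ i
  · rw [Fin.snoc_last]
    show Function.update w k c k = c
    simp
  · intro j
    rw [Fin.snoc_castSucc]
    show Function.update w k c j.1 = w j.1
    have hj : (j.1 : ℕ) ≠ k := Nat.ne_of_lt j.2
    simp [hj]

variable (a b) in
/-- The block permutations `x = αβ` and `y = αβ⁻¹`. -/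
noncomputable def blkP (ha : ∀ k, 1 ≤ a k) (hb : ∀ i, 3 ≤ b i) (δ : Bool) :
    Equiv.Perm (BubbleVert a b) :=
  permAlpha a b * (if δ then permBeta ha hb else (permBeta ha hb)⁻¹)

lemma blk_step (ha : ∀ k, 1 ≤ a k) (hb : ∀ i, 3 ≤ b i) (δ : Bool) {σ : St b}
    (h : InvSt a σ) :
    blkP a b ha hb δ (pt a b σ) = pt a b (stepSt a b δ σ) := by
  obtain ⟨k, w, j⟩ := σ
  obtain ⟨h1, h2⟩ := h
  dsimp only [InvSt] at h1 h2
  have hbase : ∀ c, (if δ then permBeta (a := a) ha hb else (permBeta ha hb)⁻¹)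
      (⟨k, fun i : Fin k => w i.1, (j : ZMod (2 * a k))⟩ : BubbleVert a b) = c →
      blkP a b ha hb δ (pt a b (k, w, j)) = bubAlpha a b c := by
    intro c hc
    rw [blkP, Equiv.Perm.mul_apply]
    rw [pt] at *
    rw [hc]
    rfl
  by_cases hj : j < a k
  · have hfix := beta_drift (a := a) (b := b) (w := fun i : Fin k => w i.1) ha h1 hj
    have : blkP a b ha hb δ (pt a b (k, w, j)) =
        bubAlpha a b ⟨k, fun i : Fin k => w i.1, (j : ZMod (2 * a k))⟩ := by
      apply hbase
      cases δ <;> simp only [if_true, if_false, Bool.false_eq_true]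
      · exact hfix.2
      · exact hfix.1
    rw [this]; unfold bubAlpha; rw [pt, stepSt, if_pos hj]
    simp only
    push_cast
    rfl
  · have hja : j = a k := by omega
    subst hja
    have hjun := beta_junction (a := a) (b := b) (w := fun i : Fin k => w i.1) ha
    set c : ZMod (b k - 1) :=
      (if δ then (0 : ZMod (b k - 1)) else ((b k - 2 : ℕ) : ZMod (b k - 1))) with hc
    have : blkP a b ha hb δ (pt a b (k, w, a k)) =
        bubAlpha a b ⟨k + 1, Fin.snoc (fun i : Fin k => w i.1) c, 0⟩ := by
      apply hbase
      cases δ <;> simp only [if_true, if_false, Bool.false_eq_true, hc]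
      · exact hjun.2
      · exact hjun.1
    rw [this]; unfold bubAlpha; rw [pt, stepSt, if_neg hj]
    simp only
    rw [restrict_update]
    norm_num
    rfl

variable (a b) in
/-- Word of blocks as a permutation; the head acts last. -/
noncomputable def gw (ha : ∀ k, 1 ≤ a k) (hb : ∀ i, 3 ≤ b i) (L : List Bool) :
    Equiv.Perm (BubbleVert a b) :=
  (L.map (blkP a b ha hb)).prod

variable (a b) in
/-- Abstract run of a word of blocks; the last entry acts first. -/
def runSt (L : List Bool) (σ : St b) : St b := L.foldr (stepSt a b) σ

lemma gw_nil (ha : ∀ k, 1 ≤ a k) (hb : ∀ i, 3 ≤ b i) : gw a b ha hb [] = 1 := rfl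

lemma gw_cons (ha : ∀ k, 1 ≤ a k) (hb : ∀ i, 3 ≤ b i) (δ : Bool) (L : List Bool) :
    gw a b ha hb (δ :: L) = blkP a b ha hb δ * gw a b ha hb L := by
  rw [gw, List.map_cons, List.prod_cons]; rfl

lemma gw_concat (ha : ∀ k, 1 ≤ a k) (hb : ∀ i, 3 ≤ b i) (δ : Bool) (L : List Bool) :
    gw a b ha hb (L ++ [δ]) = gw a b ha hb L * blkP a b ha hb δ := by
  rw [gw, List.map_append, List.prod_append]
  simp [gw]

lemma sim (ha : ∀ k, 1 ≤ a k) (hb : ∀ i, 3 ≤ b i) (L : List Bool) {σ : St b}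
    (h : InvSt a σ) :
    gw a b ha hb L (pt a b σ) = pt a b (runSt a b L σ) ∧ InvSt a (runSt a b L σ) := by
  induction L with
  | nil => exact ⟨rfl, h⟩
  | cons δ L ih =>
    obtain ⟨ih1, ih2⟩ := ih
    refine ⟨?_, invSt_step ha ih2 δ⟩
    rw [gw_cons, Equiv.Perm.mul_apply, ih1]
    exact blk_step ha hb δ ih2

/-- Two states at the same level and position with different visible letters. -/
def SepSt {b : ℕ → ℕ} (σ σ' : St b) : Prop :=
  σ.1 = σ'.1 ∧ σ.2.2 = σ'.2.2 ∧ ∃ i < σ.1, σ.2.1 i ≠ σ'.2.1 i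

lemma step_sep {σ σ' : St b} (h : InvSt a σ) (hs : SepSt σ σ')
    (δ δ' : Bool) : SepSt (stepSt a b δ σ) (stepSt a b δ' σ') := by
  obtain ⟨k, w, j⟩ := σ
  obtain ⟨k', w', j'⟩ := σ'
  obtain ⟨hk, hj, i, hi, hne⟩ := hs
  dsimp only at hk hj
  subst hk; subst hj
  obtain ⟨i1, i2⟩ := h
  dsimp only [InvSt] at i1 i2
  dsimp only [SepSt, stepSt]
  by_cases hlt : j < a k
  · rw [if_pos hlt, if_pos hlt]
    exact ⟨rfl, rfl, i, hi, hne⟩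
  · rw [if_neg hlt, if_neg hlt]
    refine ⟨rfl, rfl, i, by dsimp only at hi ⊢; omega, ?_⟩
    have hik : i ≠ k := by dsimp only at hi; omega
    dsimp only at hne ⊢
    rw [Function.update_of_ne hik, Function.update_of_ne hik]
    exact hne

lemma run_inv (ha : ∀ k, 1 ≤ a k) (L : List Bool) {σ : St b} (h : InvSt a σ) :
    InvSt a (runSt a b L σ) := by
  induction L with
  | nil => exact h
  | cons x t ih2 => exact invSt_step ha ih2 x

lemma run_sep (ha : ∀ k, 1 ≤ a k) (L L' : List Bool) (hlen : L.length = L'.length)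
    {σ σ' : St b} (h : InvSt a σ) (hs : SepSt σ σ') :
    SepSt (runSt a b L σ) (runSt a b L' σ') := by
  induction L generalizing L' σ σ' with
  | nil =>
    rw [List.length_nil] at hlen
    obtain rfl : L' = [] := List.eq_nil_of_length_eq_zero hlen.symm
    exact hs
  | cons δ L ih =>
    obtain ⟨δ', L', rfl⟩ : ∃ x t, L' = x :: t := by
      cases L' with
      | nil => simp at hlen
      | cons x t => exact ⟨x, t, rfl⟩
    rw [List.length_cons, List.length_cons] at hlen
    have hrec := ih L' (by omega) h hs
    exact step_sep (run_inv ha L h) hrec δ δ'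

lemma pt_ne_of_sep {σ σ' : St b} (hs : SepSt σ σ') : pt a b σ ≠ pt a b σ' := by
  obtain ⟨k, w, j⟩ := σ
  obtain ⟨k', w', j'⟩ := σ'
  obtain ⟨hk, hj, i, hi, hne⟩ := hs
  dsimp only at hk hj
  subst hk; subst hj
  intro hpt
  have hpt : @Eq (BV a b) (pt a b (k, w, j)) (pt a b (k, w', j)) := hpt
  rw [pt, pt, Sigma.mk.inj_iff, heq_iff_eq, Prod.mk.injEq] at hpt
  have := congrFun hpt.2.1 ⟨i, hi⟩
  exact hne this

lemma zero_ne_letter (hb : ∀ i, 3 ≤ b i) (k : ℕ) :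
    (0 : ZMod (b k - 1)) ≠ ((b k - 2 : ℕ) : ZMod (b k - 1)) := by
  have h3 := hb k
  haveI : NeZero (b k - 1) := ⟨by omega⟩
  intro h
  have hv : ((b k - 2 : ℕ) : ZMod (b k - 1)).val = b k - 2 :=
    ZMod.val_cast_of_lt (by omega)
  rw [← h] at hv
  simp [ZMod.val_zero] at hv
  omega

/-- The base junction state. -/
def sigma0 (a : ℕ → ℕ) (b : ℕ → ℕ) : St b := (0, fun _ => 0, a 0)

lemma invSt_sigma0 (ha : ∀ k, 1 ≤ a k) : InvSt a (sigma0 a b) := ⟨ha 0, le_refl _⟩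

lemma sep_init (hb : ∀ i, 3 ≤ b i) {δ δ' : Bool} (hne : δ ≠ δ') :
    SepSt (stepSt a b δ (sigma0 a b)) (stepSt a b δ' (sigma0 a b)) := by
  dsimp only [stepSt, sigma0]
  rw [if_neg (lt_irrefl _), if_neg (lt_irrefl _)]
  refine ⟨rfl, rfl, 0, Nat.zero_lt_one, ?_⟩
  dsimp only
  rw [Function.update_self, Function.update_self]
  cases δ <;> cases δ'
  · exact absurd rfl hne
  · exact fun h => zero_ne_letter hb 0 h.symm
  · exact zero_ne_letter hb 0
  · exact absurd rfl hne

theorem gw_injective (ha : ∀ k, 1 ≤ a k) (hb : ∀ i, 3 ≤ b i) (L L' : List Bool)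
    (hlen : L.length = L'.length) (h : gw a b ha hb L = gw a b ha hb L') : L = L' := by
  induction L using List.reverseRecOn generalizing L' with
  | nil =>
    rw [List.length_nil] at hlen
    exact (List.eq_nil_of_length_eq_zero hlen.symm).symm
  | append_singleton M δ ih =>
    rcases List.eq_nil_or_concat L' with rfl | ⟨M', δ', rfl⟩
    · simp at hlen
    · rw [List.concat_eq_append] at h hlen ⊢
      rw [List.length_append, List.length_append, List.length_singleton] at hlen
      have hlen' : M.length = M'.length := by simpa using hlen
      by_cases hδ : δ = δ'
      · subst hδ
        rw [gw_concat, gw_concat] at h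
        have : gw a b ha hb M = gw a b ha hb M' := mul_right_cancel h
        rw [ih M' hlen' this]
      · exfalso
        have hinv0 : InvSt a (sigma0 a b) := invSt_sigma0 ha
        have happ := congrFun (congrArg (fun (π : Equiv.Perm (BubbleVert a b)) =>
          (π : BubbleVert a b → BubbleVert a b)) h) (pt a b (sigma0 a b))
        rw [gw_concat, gw_concat] at happ
        simp only [Equiv.Perm.coe_mul, Function.comp_apply] at happ
        rw [blk_step ha hb δ hinv0, blk_step ha hb δ' hinv0] at happ
        rw [(sim ha hb M (invSt_step ha hinv0 δ)).1,
          (sim ha hb M' (invSt_step ha hinv0 δ')).1] at happ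
        exact pt_ne_of_sep
          (run_sep ha M M' hlen' (invSt_step ha hinv0 δ) (sep_init hb hδ)) happ

section Counting

lemma one_mem_wordBall {G : Type*} [Group G] (S : Set G) (r : ℕ) :
    (1 : G) ∈ wordBall S r := ⟨[], by simp⟩

lemma mul_mem_wordBall {G : Type*} [Group G] {S : Set G} {x g : G} {r : ℕ}
    (hx : x ∈ S) (hg : g ∈ wordBall S r) : x * g ∈ wordBall S (r + 1) := by
  obtain ⟨L, hL, hlen, rfl⟩ := hg
  exact ⟨x :: L, by
    refine ⟨?_, ?_, ?_⟩
    · intro y hy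
      rcases List.mem_cons.mp hy with rfl | hy
      · exact hx
      · exact hL y hy
    · simpa using Nat.succ_le_succ hlen
    · rw [List.prod_cons]⟩

lemma wordBall_mono {G : Type*} [Group G] (S : Set G) {r r' : ℕ} (h : r ≤ r') :
    wordBall S r ⊆ wordBall S r' := by
  rintro g ⟨L, hL, hlen, rfl⟩
  exact ⟨L, hL, hlen.trans h, rfl⟩

lemma gw_mem_wordBall (ha : ∀ k, 1 ≤ a k) (hb : ∀ i, 3 ≤ b i) (L : List Bool) :
    gw a b ha hb L ∈ wordBall (bubGens a b) (2 * L.length) := by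
  induction L with
  | nil => exact one_mem_wordBall _ _
  | cons δ L ih =>
    rw [gw_cons, blkP, mul_assoc]
    have h1 : (if δ then permBeta (a := a) ha hb else (permBeta ha hb)⁻¹) *
        gw a b ha hb L ∈ wordBall (bubGens a b) (2 * L.length + 1) := by
      refine mul_mem_wordBall ?_ ih
      cases δ
      · simpa using permBetaInv_mem ha hb
      · simpa using permBeta_mem ha hb
    have h2 := mul_mem_wordBall (permAlpha_mem (a := a) (b := b)) h1
    have : 2 * (δ :: L).length = 2 * L.length + 1 + 1 := by
      rw [List.length_cons]; ring
    rwa [this]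

lemma bubGens_finite (ha : ∀ k, 1 ≤ a k) (hb : ∀ i, 3 ≤ b i) :
    (bubGens a b).Finite := by
  have hsub : bubGens a b ⊆
      {permAlpha a b, (permAlpha a b)⁻¹, permBeta ha hb, (permBeta ha hb)⁻¹} := by
    intro π hπ
    rcases hπ with h | h | h | h
    · exact Or.inl (Equiv.coe_fn_injective h)
    · exact Or.inr (Or.inr (Or.inl (Equiv.coe_fn_injective h)))
    · have : π⁻¹ = permAlpha a b := Equiv.coe_fn_injective h
      refine Or.inr (Or.inl ?_)
      rw [← this, inv_inv]
    · have : π⁻¹ = permBeta ha hb := Equiv.coe_fn_injective h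
      refine Or.inr (Or.inr (Or.inr ?_))
      rw [← this, inv_inv]
      exact Set.mem_singleton _
  exact Set.Finite.subset (Set.toFinite _) hsub

lemma wordBall_finite {G : Type*} [Group G] {S : Set G} (hS : S.Finite) (r : ℕ) :
    (wordBall S r).Finite := by
  induction r with
  | zero =>
    refine Set.Finite.subset (Set.finite_singleton 1) ?_
    rintro g ⟨L, hL, hlen, rfl⟩
    obtain rfl : L = [] := List.eq_nil_of_length_eq_zero (Nat.le_zero.mp hlen)
    simp
  | succ r ih =>
    refine Set.Finite.subset ((ih.union (hS.biUnion (fun s _ => ih.image (s * ·))))) ?_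
    rintro g ⟨L, hL, hlen, rfl⟩
    cases L with
    | nil => exact Or.inl (one_mem_wordBall S r)
    | cons x t =>
      refine Or.inr (Set.mem_biUnion (hL x List.mem_cons_self) ?_)
      refine ⟨t.prod, ⟨t, fun y hy => hL y (List.mem_cons_of_mem x hy),
        by simpa using Nat.succ_le_succ_iff.mp hlen, rfl⟩, ?_⟩
      rw [List.prod_cons]

end Counting

lemma card_lower (ha : ∀ k, 1 ≤ a k) (hb : ∀ i, 3 ≤ b i) (n : ℕ) :
    (2 ^ n : ℕ) ≤ (wordBall (bubGens a b) (2 * n)).ncard := by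
  set F : (Fin n → Bool) → Equiv.Perm (BubbleVert a b) :=
    fun ε => gw a b ha hb (List.ofFn ε) with hF
  have hFinj : Function.Injective F := by
    intro ε ε' h
    have := gw_injective ha hb (List.ofFn ε) (List.ofFn ε')
      (by rw [List.length_ofFn, List.length_ofFn]) h
    exact List.ofFn_injective this
  have hsub : Set.range F ⊆ wordBall (bubGens a b) (2 * n) := by
    rintro g ⟨ε, rfl⟩
    have := gw_mem_wordBall ha hb (List.ofFn ε)
    rwa [List.length_ofFn] at this
  have h1 : (Set.range F).ncard = 2 ^ n := by
    rw [← Nat.card_coe_set_eq, Nat.card_range_of_injective hFinj,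
      Nat.card_eq_fintype_card]
    simp
  calc (2 ^ n : ℕ) = (Set.range F).ncard := h1.symm
    _ ≤ _ := Set.ncard_le_ncard hsub
        (wordBall_finite (bubGens_finite ha hb) _)

lemma one_ne_permAlpha (ha : ∀ k, 1 ≤ a k) :
    (1 : Equiv.Perm (BubbleVert a b)) ≠ permAlpha a b := by
  intro h
  have h0 := congrFun (congrArg (fun (π : Equiv.Perm (BubbleVert a b)) =>
    (π : BubbleVert a b → BubbleVert a b)) h) (bubRoot a b)
  simp only [Equiv.Perm.coe_one, id_eq] at h0
  have h1 : @Eq (BV a b) (bubRoot a b) ⟨0, fun i => i.elim0, (0 : ZMod (2 * a 0)) + 1⟩ := h0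
  rw [bubRoot, Sigma.mk.inj_iff, heq_iff_eq, Prod.mk.injEq] at h1
  have h2 := h1.2.2
  rw [zero_add] at h2
  haveI : NeZero (2 * a 0) := ⟨by have := ha 0; omega⟩
  have : ((1 : ℕ) : ZMod (2 * a 0)) = 0 := by exact_mod_cast h2.symm
  have hv : ((1 : ℕ) : ZMod (2 * a 0)).val = 1 :=
    ZMod.val_cast_of_lt (by have := ha 0; omega)
  rw [this] at hv
  simp [ZMod.val_zero] at hv

lemma two_le_card_ball1 (ha : ∀ k, 1 ≤ a k) (hb : ∀ i, 3 ≤ b i) :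
    2 ≤ (wordBall (bubGens a b) 1).ncard := by
  have hsub : {(1 : Equiv.Perm (BubbleVert a b)), permAlpha a b} ⊆
      wordBall (bubGens a b) 1 := by
    rintro g (rfl | rfl)
    · exact one_mem_wordBall _ _
    · have := mul_mem_wordBall (permAlpha_mem (a := a) (b := b)) (one_mem_wordBall (bubGens a b) 0)
      simpa using this
  calc 2 = ({(1 : Equiv.Perm (BubbleVert a b)), permAlpha a b} : Set _).ncard :=
        (Set.ncard_pair (one_ne_permAlpha ha)).symm
    _ ≤ _ := Set.ncard_le_ncard hsub (wordBall_finite (bubGens_finite ha hb) 1)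

end Dynamics
end BubbleProof

theorem statement7' (a b : ℕ → ℕ) (ha : ∀ k, 1 ≤ a k) (hb : ∀ i, 3 ≤ b i) :
    ∃ c : ℝ, 1 < c ∧ ∀ r : ℕ, 1 ≤ r →
      c ^ r ≤ ((wordBall (bubGens a b) r).ncard : ℝ) := by
  refine ⟨(2 : ℝ) ^ ((1 : ℝ)/4), ?_, ?_⟩
  · rw [show (1 : ℝ) = (2 : ℝ) ^ (0 : ℝ) by rw [Real.rpow_zero]]
    exact Real.rpow_lt_rpow_of_exponent_lt one_lt_two (by norm_num)
  · intro r hr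
    have hrw : ((2 : ℝ) ^ ((1 : ℝ)/4)) ^ r = (2 : ℝ) ^ (((1 : ℝ)/4) * r) := by
      rw [← Real.rpow_natCast ((2 : ℝ) ^ ((1 : ℝ)/4)) r, ← Real.rpow_mul (by norm_num)]
    rw [hrw]
    rcases Nat.lt_or_ge r 2 with h2 | h2
    · obtain rfl : r = 1 := by omega
      have hb1 : (2 : ℝ) ≤ ((wordBall (bubGens a b) 1).ncard : ℝ) := by
        exact_mod_cast BubbleProof.two_le_card_ball1 ha hb
      refine le_trans ?_ hb1
      calc (2 : ℝ) ^ (((1 : ℝ)/4) * (1 : ℕ)) ≤ (2 : ℝ) ^ (1 : ℝ) :=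
            Real.rpow_le_rpow_of_exponent_le one_le_two (by norm_num)
        _ = 2 := Real.rpow_one 2
    · set n := r / 2 with hn
      have hcard : (2 ^ n : ℕ) ≤ (wordBall (bubGens a b) r).ncard := by
        refine le_trans (BubbleProof.card_lower ha hb n) ?_
        exact Set.ncard_le_ncard (BubbleProof.wordBall_mono _ (by omega))
          (BubbleProof.wordBall_finite (BubbleProof.bubGens_finite ha hb) r)
      have hreal : (2 : ℝ) ^ (((1 : ℝ)/4) * r) ≤ ((2 ^ n : ℕ) : ℝ) := by
        have hrn : ((1 : ℝ)/4) * r ≤ (n : ℝ) := by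
          have : r ≤ 4 * n := by omega
          have h4 : (r : ℝ) ≤ 4 * (n : ℝ) := by exact_mod_cast this
          linarith
        calc (2 : ℝ) ^ (((1 : ℝ)/4) * r) ≤ (2 : ℝ) ^ ((n : ℕ) : ℝ) :=
              Real.rpow_le_rpow_of_exponent_le one_le_two hrn
          _ = ((2 ^ n : ℕ) : ℝ) := by
              rw [Real.rpow_natCast]; push_cast; ring
      exact hreal.trans (by exact_mod_cast hcard)

theorem statement7 (a b : ℕ → ℕ) (ha : ∀ k, 1 ≤ a k) (hb : ∀ i, 3 ≤ b i) :
    ∃ c : ℝ, 1 < c ∧ ∀ r : ℕ, 1 ≤ r →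
      c ^ r ≤ ((wordBall (bubGens a b) r).ncard : ℝ) := by
  exact statement7' a b ha hb
end

section
/- Let Γ_{a,b} be a bubble group satisfying Assumption (A): b_i = b is constant and a₁ ≤ a₂ ≤ … with a_n → ∞. Let m_k = (1^{k−1}, ⌊a_k/2⌋), let B_k(l) be the ball of radius l about m_k in the bubble graph X_{a,b}, and let Ω_k(l) be the set of words ω in the letters {α^{±1}, β^{±1}} whose inverted orbit 𝒪(ω; m_k) is contained in B_k(l). Suppose ω = γ₁⋯γ_p ∈ Ω_k(l) with l ≤ (a_k/4) − 1. Then for every 1 ≤ j ≤ p there is an integer s_j with |s_j| ≤ l such that γ₁⋯γ_j · m_k = α^{s_j} · m_k and γ₁⋯γ_{j−1}γ_j · m_k = γ_jγ_{j−1}⋯γ₁ · m_k; moreover, setting s₀ = 0, every subword u = γ_i⋯γ_j of ω satisfies u · m_k = α^{s_j − s_{i−1}} · m_k and u⁻¹ · m_k = α^{−s_j + s_{i−1}} · m_k. -/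
open scoped Pointwise

open Paper

namespace BubAux
open Paper

/-- Contribution of a letter to the α-exponent. -/
def cval : GLetter → ℤ
  | .A => 1
  | .A' => -1
  | .B => 0
  | .B' => 0

/-- Sum of letter contributions of a word. -/
def csum (M : List GLetter) : ℤ := (M.map cval).sum

@[simp] lemma csum_nil : csum [] = 0 := rfl

lemma csum_cons (γ : GLetter) (M : List GLetter) : csum (γ :: M) = cval γ + csum M := by
  simp [csum]

lemma csum_append (A B : List GLetter) : csum (A ++ B) = csum A + csum B := by
  simp [csum]

lemma csum_reverse (M : List GLetter) : csum M.reverse = csum M := by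
  rw [csum, csum, List.map_reverse, List.sum_reverse]

lemma abs_cval_le (γ : GLetter) : |cval γ| ≤ 1 := by cases γ <;> simp [cval]

lemma abs_csum_le (M : List GLetter) : |csum M| ≤ (M.length : ℤ) := by
  induction M with
  | nil => simp
  | cons γ M ih =>
    have h1 := abs_cval_le γ
    calc |csum (γ :: M)| = |cval γ + csum M| := by rw [csum_cons]
    _ ≤ |cval γ| + |csum M| := abs_add_le _ _
    _ ≤ 1 + M.length := by linarith
    _ = ((γ :: M).length : ℤ) := by simp [add_comm]

lemma cval_inv (γ : GLetter) : cval γ.inv = - cval γ := by cases γ <;> rfl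

lemma csum_map_inv (M : List GLetter) : csum (M.map GLetter.inv) = - csum M := by
  induction M with
  | nil => simp
  | cons γ M ih =>
    rw [List.map_cons, csum_cons, csum_cons, cval_inv, ih]; ring

lemma csum_revinv (M : List GLetter) : csum (M.reverse.map GLetter.inv) = - csum M := by
  rw [List.map_reverse, csum_reverse, csum_map_inv]

section PT

variable (a b : ℕ → ℕ) (k : ℕ)

/-- The point `α^t · 𝔪_k` on the level-`k` bubble. -/
noncomputable def pt (t : ℤ) : BubbleVert a b :=
  ⟨k, fun _ => 0, ((a k / 2 : ℕ) : ZMod (2 * a k)) + (t : ZMod (2 * a k))⟩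

lemma pt_zero : pt a b k 0 = bubM a b k := by
  simp [pt, bubM]
  rfl

lemma mk_eq {w : (i : Fin k) → ZMod (b i.1 - 1)} {u v : ZMod (2 * a k)} (h : u = v) :
    (⟨k, w, u⟩ : BubbleVert a b) = ⟨k, w, v⟩ := by rw [h]

lemma pt_congr {s t : ℤ} (h : s = t) : pt a b k s = pt a b k t := by rw [h]

lemma alpha_pt (t : ℤ) : bubAlpha a b (pt a b k t) = pt a b k (t + 1) := by
  show (⟨k, fun _ => 0, (((a k / 2 : ℕ) : ZMod (2 * a k)) + (t : ZMod (2 * a k))) + 1⟩ :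
    BubbleVert a b) = _
  exact mk_eq a b k (by push_cast; ring)

lemma alphaInv_pt (t : ℤ) : bubAlphaInv a b (pt a b k t) = pt a b k (t - 1) := by
  show (⟨k, fun _ => 0, (((a k / 2 : ℕ) : ZMod (2 * a k)) + (t : ZMod (2 * a k))) - 1⟩ :
    BubbleVert a b) = _
  exact mk_eq a b k (by push_cast; ring)

variable {a b k}

lemma pt_u_spec (l : ℕ) (hak : 4 * l + 4 ≤ a k) (t : ℤ) (ht : |t| ≤ 2 * (l : ℤ) + 1) :
    (((a k / 2 : ℕ) : ZMod (2 * a k)) + (t : ZMod (2 * a k))) ≠ 0 ∧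
    (((a k / 2 : ℕ) : ZMod (2 * a k)) + (t : ZMod (2 * a k))) ≠ ((a k : ℕ) : ZMod (2 * a k)) := by
  haveI : NeZero (2 * a k) := ⟨by omega⟩
  have habs := abs_le.mp ht
  have hd1 : 2 * l + 2 ≤ a k / 2 := by omega
  have hd2 : 2 * (a k / 2) ≤ a k := by omega
  set x : ℤ := ((a k / 2 : ℕ) : ℤ) + t with hx
  have hx1 : 1 ≤ x := by simp only [hx]; omega
  have hx2 : x ≤ (a k : ℤ) - 1 := by simp only [hx]; omega
  have hu : (x : ZMod (2 * a k)) = ((a k / 2 : ℕ) : ZMod (2 * a k)) + (t : ZMod (2 * a k)) := by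
    rw [hx, Int.cast_add, Int.cast_natCast]
  constructor
  · rw [← hu]
    intro h
    rw [ZMod.intCast_zmod_eq_zero_iff_dvd] at h
    have := Int.le_of_dvd (by omega) h
    omega
  · rw [← hu]
    intro h
    have h' : ((x - (a k : ℕ) : ℤ) : ZMod (2 * a k)) = 0 := by
      push_cast
      rw [h]
      ring
    rw [ZMod.intCast_zmod_eq_zero_iff_dvd] at h'
    have h2 : ((2 * a k : ℕ) : ℤ) ∣ ((a k : ℕ) : ℤ) - x := by
      rw [show ((a k : ℕ) : ℤ) - x = -(x - (a k : ℕ)) by ring]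
      exact dvd_neg.mpr h'
    have := Int.le_of_dvd (by omega) h2
    omega

lemma beta_pt (l : ℕ) (hak : 4 * l + 4 ≤ a k) (t : ℤ) (ht : |t| ≤ 2 * (l : ℤ) + 1) :
    bubBeta a b (pt a b k t) = pt a b k t := by
  obtain ⟨hu0, hua⟩ := pt_u_spec l hak t ht
  set u : ZMod (2 * a k) := ((a k / 2 : ℕ) : ZMod (2 * a k)) + (t : ZMod (2 * a k)) with hudef
  cases k with
  | zero =>
    show bubBeta a b ⟨0, fun _ => 0, u⟩ = ⟨0, fun _ => 0, u⟩
    rw [bubBeta]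
    exact if_neg (fun h => hua h.1)
  | succ k' =>
    show bubBeta a b ⟨k' + 1, fun _ => 0, u⟩ = ⟨k' + 1, fun _ => 0, u⟩
    rw [bubBeta]
    exact (if_neg (fun h : _ ∧ u ≠ 0 => hua h.1)).trans (if_neg hu0)

lemma betaInv_pt (l : ℕ) (hak : 4 * l + 4 ≤ a k) (t : ℤ) (ht : |t| ≤ 2 * (l : ℤ) + 1) :
    bubBetaInv a b (pt a b k t) = pt a b k t := by
  obtain ⟨hu0, hua⟩ := pt_u_spec l hak t ht
  set u : ZMod (2 * a k) := ((a k / 2 : ℕ) : ZMod (2 * a k)) + (t : ZMod (2 * a k)) with hudef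
  cases k with
  | zero =>
    show bubBetaInv a b ⟨0, fun _ => 0, u⟩ = ⟨0, fun _ => 0, u⟩
    rw [bubBetaInv]
    exact if_neg (fun h => hua h.1)
  | succ k' =>
    show bubBetaInv a b ⟨k' + 1, fun _ => 0, u⟩ = ⟨k' + 1, fun _ => 0, u⟩
    rw [bubBetaInv]
    exact (if_neg (fun h : _ ∧ u ≠ 0 => hua h.1)).trans (if_neg hu0)

lemma pt_inj {s t : ℤ} (hk : 0 < a k) (h : pt a b k s = pt a b k t)
    (hlt : |s - t| < 2 * (a k : ℤ)) : s = t := by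
  haveI : NeZero (2 * a k) := ⟨by omega⟩
  have h2 : (((a k / 2 : ℕ) : ZMod (2 * a k)) + (s : ZMod (2 * a k)))
      = (((a k / 2 : ℕ) : ZMod (2 * a k)) + (t : ZMod (2 * a k))) := by
    have := (Sigma.mk.inj_iff.mp h).2
    have h3 := heq_iff_eq.mp this
    exact congrArg Prod.snd h3
  have h4 : ((s - t : ℤ) : ZMod (2 * a k)) = 0 := by
    push_cast
    rw [sub_eq_zero]
    exact add_left_cancel h2
  rw [ZMod.intCast_zmod_eq_zero_iff_dvd] at h4
  have habs := abs_le.mp (le_of_lt hlt)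
  rcases eq_or_ne (s - t) 0 with h5 | h5
  · omega
  · have := Int.le_of_dvd (abs_pos.mpr h5) ((dvd_abs _ _).mpr h4)
    omega

lemma letter_pt (l : ℕ) (hak : 4 * l + 4 ≤ a k) (γ : GLetter) (t : ℤ)
    (ht : |t| ≤ 2 * (l : ℤ) + 1) :
    GLetter.apply (bubAlpha a b) (bubAlphaInv a b) (bubBeta a b) (bubBetaInv a b) γ
      (pt a b k t) = pt a b k (t + cval γ) := by
  cases γ with
  | A => exact alpha_pt a b k t
  | A' =>
    show bubAlphaInv a b (pt a b k t) = _
    rw [alphaInv_pt]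
    exact pt_congr a b k (by simp [cval]; ring)
  | B =>
    show bubBeta a b (pt a b k t) = _
    rw [beta_pt l hak t ht]
    exact pt_congr a b k (by simp [cval])
  | B' =>
    show bubBetaInv a b (pt a b k t) = _
    rw [betaInv_pt l hak t ht]
    exact pt_congr a b k (by simp [cval])

lemma bubApply_cons (γ : GLetter) (M : List GLetter) (x : BubbleVert a b) :
    bubApply a b (γ :: M) x =
      GLetter.apply (bubAlpha a b) (bubAlphaInv a b) (bubBeta a b) (bubBetaInv a b) γ
        (bubApply a b M x) := rfl

/-- Key lemma: a word all of whose suffix sums are small acts on `𝔪_k` as `α^{csum}`. -/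
lemma apply_of_safe (l : ℕ) (hak : 4 * l + 4 ≤ a k) :
    ∀ M : List GLetter, (∀ N, N <:+ M → |csum N| ≤ 2 * (l : ℤ) + 1) →
      bubApply a b M (pt a b k 0) = pt a b k (csum M) := by
  intro M
  induction M with
  | nil => intro _; rfl
  | cons γ M ih =>
    intro h
    have hM := ih (fun N hN => h N (hN.trans (List.suffix_cons γ M)))
    rw [bubApply_cons, hM, letter_pt l hak γ _ (h M (List.suffix_cons γ M))]
    exact pt_congr a b k (by rw [csum_cons]; ring)

lemma alpha_iter (n : ℕ) (t : ℤ) :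
    (bubAlpha a b)^[n] (pt a b k t) = pt a b k (t + n) := by
  induction n with
  | zero => simp
  | succ n ih =>
    rw [Function.iterate_succ_apply', ih, alpha_pt]
    exact pt_congr a b k (by push_cast; ring)

lemma alphaInv_iter (n : ℕ) (t : ℤ) :
    (bubAlphaInv a b)^[n] (pt a b k t) = pt a b k (t - n) := by
  induction n with
  | zero => simp
  | succ n ih =>
    rw [Function.iterate_succ_apply', ih, alphaInv_pt]
    exact pt_congr a b k (by push_cast; ring)

lemma zpow_pt (s : ℤ) : bubAlphaZPow a b s (bubM a b k) = pt a b k s := by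
  rw [← pt_zero, bubAlphaZPow]
  split_ifs with h
  · rw [alpha_iter]
    exact pt_congr a b k (by omega)
  · rw [alphaInv_iter]
    exact pt_congr a b k (by omega)

end PT

section Main

variable {a b : ℕ → ℕ} {k l : ℕ} {L : List GLetter}

/-- Sum of a segment in terms of prefix sums. -/
lemma csum_seg (L : List GLetter) (x y : ℕ) (hx : x ≤ y) :
    csum ((L.drop x).take (y - x)) = csum (L.take y) - csum (L.take x) := by
  have hseg : L.take x ++ ((L.drop x).take (y - x)) = L.take y := by
    rw [← List.take_add, show x + (y - x) = y by omega]
  have := congrArg csum hseg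
  rw [csum_append] at this
  linarith

lemma prefix_bound (hak : 4 * l + 4 ≤ a k)
    (hw : bubInvOrbit a b L (bubM a b k) ⊆ bubBall a b (bubM a b k) l) :
    ∀ j, j ≤ L.length → |csum (L.take j)| ≤ (l : ℤ) := by
  intro j
  induction j using Nat.strong_induction_on with
  | _ j ih =>
  intro hj
  cases j with
  | zero => simp
  | succ j' =>
    have hsucc : |csum (L.take (j' + 1))| ≤ (l : ℤ) + 1 := by
      rw [List.take_succ, csum_append]
      refine (abs_add_le _ _).trans ?_
      have h1 := ih j' (by omega) (by omega)
      have h2 : ∀ o : Option GLetter, |csum o.toList| ≤ 1 := by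
        rintro (_ | γ)
        · simp
        · simpa [csum_cons] using abs_cval_le γ
      linarith [h2 L[j']?]
    have hsafe : ∀ N, N <:+ L.take (j' + 1) → |csum N| ≤ 2 * (l : ℤ) + 1 := by
      rintro N ⟨P, hP⟩
      have hNeq : N = (L.take (j' + 1)).drop P.length := by rw [← hP, List.drop_left]
      rw [List.drop_take] at hNeq
      rcases le_or_gt P.length j' with hc | hc
      · rw [hNeq, csum_seg L P.length (j' + 1) (by omega)]
        have hPb : |csum (L.take P.length)| ≤ (l : ℤ) := ih P.length (by omega) (by omega)
        calc |csum (L.take (j' + 1)) - csum (L.take P.length)|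
            ≤ |csum (L.take (j' + 1))| + |csum (L.take P.length)| := abs_sub _ _
          _ ≤ 2 * (l : ℤ) + 1 := by linarith
      · rw [show j' + 1 - P.length = 0 by omega] at hNeq
        rw [hNeq]
        simp only [List.take_zero, csum_nil, abs_zero]
        positivity
    have heq := apply_of_safe (a := a) (b := b) (k := k) l hak (L.take (j' + 1)) hsafe
    rw [pt_zero] at heq
    have hmem : bubApply a b (L.take (j' + 1)) (bubM a b k) ∈
        bubInvOrbit a b L (bubM a b k) := ⟨j' + 1, hj, rfl⟩
    obtain ⟨M, hMl, hMe⟩ := hw hmem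
    have hMb : |csum M| ≤ (l : ℤ) := (abs_csum_le M).trans (by exact_mod_cast hMl)
    have hM := apply_of_safe (a := a) (b := b) (k := k) l hak M (fun N hN => by
      have h5 : (N.length : ℤ) ≤ l := by exact_mod_cast hN.length_le.trans hMl
      have := abs_csum_le N
      linarith)
    rw [pt_zero] at hM
    have hpt : pt a b k (csum M) = pt a b k (csum (L.take (j' + 1))) := by
      rw [← hM, ← heq, hMe]
    have h8 : (4 * (l : ℤ) + 4) ≤ ((a k : ℕ) : ℤ) := by exact_mod_cast hak
    have hEq := pt_inj (by omega) hpt (by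
      calc |csum M - csum (L.take (j' + 1))|
          ≤ |csum M| + |csum (L.take (j' + 1))| := abs_sub _ _
        _ < 2 * ((a k : ℕ) : ℤ) := by linarith)
    rw [← hEq]
    exact hMb

lemma seg_suffix_bound (hbnd : ∀ i, i ≤ L.length → |csum (L.take i)| ≤ (l : ℤ))
    (x y : ℕ) (hy : y ≤ L.length) :
    ∀ N, N <:+ (L.drop x).take (y - x) → |csum N| ≤ 2 * (l : ℤ) + 1 := by
  rintro N ⟨P, hP⟩
  have hNeq : N = ((L.drop x).take (y - x)).drop P.length := by rw [← hP, List.drop_left]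
  rw [List.drop_take, List.drop_drop] at hNeq
  rcases le_or_gt (x + P.length) y with hc | hc
  · rw [show y - x - P.length = y - (x + P.length) by omega] at hNeq
    rw [hNeq, csum_seg L (x + P.length) y hc]
    have h1 := hbnd y hy
    have h2 := hbnd (x + P.length) (by omega)
    calc |csum (L.take y) - csum (L.take (x + P.length))|
        ≤ |csum (L.take y)| + |csum (L.take (x + P.length))| := abs_sub _ _
      _ ≤ 2 * (l : ℤ) + 1 := by linarith
  · rw [show y - x - P.length = 0 by omega] at hNeq
    rw [hNeq]
    simp only [List.take_zero, csum_nil, abs_zero]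
    positivity

lemma seg_eq (hak : 4 * l + 4 ≤ a k)
    (hbnd : ∀ i, i ≤ L.length → |csum (L.take i)| ≤ (l : ℤ))
    (x y : ℕ) (hx : x ≤ y) (hy : y ≤ L.length) :
    bubApply a b ((L.drop x).take (y - x)) (bubM a b k) =
      pt a b k (csum (L.take y) - csum (L.take x)) := by
  have h := apply_of_safe (a := a) (b := b) (k := k) l hak _ (seg_suffix_bound hbnd x y hy)
  rw [pt_zero] at h
  rw [h, csum_seg L x y hx]

lemma rev_eq (hak : 4 * l + 4 ≤ a k)
    (hbnd : ∀ i, i ≤ L.length → |csum (L.take i)| ≤ (l : ℤ))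
    (j : ℕ) (hj : j ≤ L.length) :
    bubApply a b (L.take j).reverse (bubM a b k) = pt a b k (csum (L.take j)) := by
  have hsafe : ∀ N, N <:+ (L.take j).reverse → |csum N| ≤ 2 * (l : ℤ) + 1 := by
    rintro N ⟨P, hP⟩
    have hNeq : N = ((L.take j).reverse).drop P.length := by rw [← hP, List.drop_left]
    rw [List.drop_reverse, List.take_take] at hNeq
    rw [hNeq, csum_reverse]
    have := hbnd (min ((L.take j).length - P.length) j) (le_trans (min_le_right _ _) hj)
    linarith
  have h := apply_of_safe (a := a) (b := b) (k := k) l hak _ hsafe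
  rw [pt_zero] at h
  rw [h, csum_reverse]

lemma invseg_eq (hak : 4 * l + 4 ≤ a k)
    (hbnd : ∀ i, i ≤ L.length → |csum (L.take i)| ≤ (l : ℤ))
    (x y : ℕ) (hx : x ≤ y) (hy : y ≤ L.length) :
    bubApply a b (((L.drop x).take (y - x)).reverse.map GLetter.inv) (bubM a b k) =
      pt a b k (-(csum (L.take y)) + csum (L.take x)) := by
  have hsafe : ∀ N, N <:+ ((L.drop x).take (y - x)).reverse.map GLetter.inv →
      |csum N| ≤ 2 * (l : ℤ) + 1 := by
    rintro N ⟨P, hP⟩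
    set u := (L.drop x).take (y - x) with hu
    have hNeq : N = (u.reverse.map GLetter.inv).drop P.length := by
      rw [← hP, List.drop_left]
    rw [← List.map_drop, List.drop_reverse] at hNeq
    set m := u.length - P.length with hm
    rw [hNeq, csum_revinv]
    rw [abs_neg]
    have htt : u.take m = (L.drop x).take (min m (y - x)) := by
      rw [hu, List.take_take]
    set y' := x + min m (y - x) with hy'
    have hxy' : x ≤ y' := by omega
    have hyy' : y' ≤ L.length := by
      have h1 : min m (y - x) ≤ y - x := min_le_right _ _
      omega
    have hmm : min m (y - x) = y' - x := by omega
    rw [htt, hmm, csum_seg L x y' hxy']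
    have h1 := hbnd y' hyy'
    have h2 := hbnd x (by omega)
    calc |csum (L.take y') - csum (L.take x)|
        ≤ |csum (L.take y')| + |csum (L.take x)| := abs_sub _ _
      _ ≤ 2 * (l : ℤ) + 1 := by linarith
  have h := apply_of_safe (a := a) (b := b) (k := k) l hak _ hsafe
  rw [pt_zero] at h
  rw [h, csum_revinv, csum_seg L x y hx]
  exact pt_congr a b k (by ring)

end Main

end BubAux

theorem statement8 (a b : ℕ → ℕ) (bc : ℕ) (hb : ∀ i, b i = bc) (hbc : 2 ≤ bc)
    (ha1 : 1 ≤ a 0) (hamono : Monotone a)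
    (hatop : Filter.Tendsto a Filter.atTop Filter.atTop)
    (k l : ℕ) (hl : (l : ℝ) ≤ (a k : ℝ) / 4 - 1)
    (L : List GLetter)
    (hω : bubInvOrbit a b L (bubM a b k) ⊆ bubBall a b (bubM a b k) l) :
    ∃ s : ℕ → ℤ, s 0 = 0 ∧
      (∀ j : ℕ, 1 ≤ j → j ≤ L.length →
        |s j| ≤ (l : ℤ) ∧
        bubApply a b (L.take j) (bubM a b k) = bubAlphaZPow a b (s j) (bubM a b k) ∧
        bubApply a b (L.take j) (bubM a b k) =
          bubApply a b (L.take j).reverse (bubM a b k)) ∧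
      (∀ i j : ℕ, 1 ≤ i → i ≤ j → j ≤ L.length →
        bubApply a b ((L.drop (i - 1)).take (j - i + 1)) (bubM a b k) =
          bubAlphaZPow a b (s j - s (i - 1)) (bubM a b k) ∧
        bubApply a b (((L.drop (i - 1)).take (j - i + 1)).reverse.map GLetter.inv)
            (bubM a b k) =
          bubAlphaZPow a b (-(s j) + s (i - 1)) (bubM a b k)) := by
  have hak : 4 * l + 4 ≤ a k := by
    have h4 : (4 * (l : ℝ) + 4) ≤ (a k : ℝ) := by linarith
    exact_mod_cast h4
  have hbnd := BubAux.prefix_bound hak hω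
  refine ⟨fun j => BubAux.csum (L.take j), by simp, ?_, ?_⟩
  · intro j h1 hj
    refine ⟨hbnd j hj, ?_, ?_⟩
    · rw [BubAux.zpow_pt]
      have h5 := BubAux.seg_eq (b := b) hak hbnd 0 j (by omega) hj
      simpa using h5
    · rw [BubAux.rev_eq hak hbnd j hj]
      have h5 := BubAux.seg_eq (b := b) hak hbnd 0 j (by omega) hj
      simpa using h5
  · intro i j h1 hij hj
    have hx : i - 1 ≤ j := by omega
    have hrw : j - i + 1 = j - (i - 1) := by omega
    constructor
    · rw [hrw, BubAux.seg_eq (b := b) hak hbnd (i - 1) j hx hj, BubAux.zpow_pt]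
    · rw [hrw, BubAux.invseg_eq (b := b) hak hbnd (i - 1) j hx hj, BubAux.zpow_pt]
end

section
/- Let a = (a_n) be a sequence of positive integers with liminf a_n = ∞ and b = (b_i) an arbitrary sequence with b_i ≥ 2. Then the bubble group Γ_{a,b} is amenable. -/
open scoped Pointwise

open Paper

namespace AmenTools


open Finset Filter

theorem isAmenable_of_commGroup (G : Type*) [CommGroup G] : Paper.IsAmenable G := by
  classical
  intro T ε hε
  set l := T.toList with hl
  set m := l.length with hm
  set box : ℕ → Finset G := fun K =>
    (Finset.univ : Finset (Fin m → Fin (K+1))).image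
      (fun e => ∏ i : Fin m, l.get i ^ ((e i : ℕ))) with hbox
  have hone : ∀ K, (1 : G) ∈ box K := by
    intro K
    refine Finset.mem_image.2 ⟨fun _ => ⟨0, Nat.succ_pos K⟩, Finset.mem_univ _, ?_⟩
    simp
  have hcard : ∀ K, (box K).card ≤ (K+1)^m := by
    intro K
    calc (box K).card ≤ (Finset.univ : Finset (Fin m → Fin (K+1))).card :=
          Finset.card_image_le
    _ = (K+1)^m := by
          rw [Finset.card_univ, Fintype.card_fun]
          simp
  have hmono : ∀ K, box K ⊆ box (K+1) := by
    intro K x hx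
    obtain ⟨e, -, rfl⟩ := Finset.mem_image.1 hx
    refine Finset.mem_image.2 ⟨fun i => (e i).castSucc, Finset.mem_univ _, ?_⟩
    simp
  have hstep : ∀ (s : G), s ∈ T → ∀ (K : ℕ), ∀ x ∈ box K, s * x ∈ box (K+1) := by
    intro s hs K x hx
    obtain ⟨j, hj⟩ := List.mem_iff_get.1 (Finset.mem_toList.2 hs)
    obtain ⟨e, -, rfl⟩ := Finset.mem_image.1 hx
    refine Finset.mem_image.2 ⟨fun i => if i = j then (e i).succ else (e i).castSucc,
      Finset.mem_univ _, ?_⟩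
    have hval : ∀ i : Fin m,
        (((if i = j then (e i).succ else (e i).castSucc : Fin (K+2))) : ℕ)
          = (e i : ℕ) + (if i = j then 1 else 0) := by
      intro i
      by_cases h : i = j <;> simp [h]
    calc (∏ i : Fin m, l.get i ^ (((if i = j then (e i).succ else (e i).castSucc : Fin (K+2))) : ℕ))
        = ∏ i : Fin m, (l.get i ^ (e i : ℕ) * (if i = j then l.get i else 1)) := by
          refine Finset.prod_congr rfl fun i _ => ?_
          rw [hval i]
          by_cases h : i = j <;> simp [h, pow_add, pow_succ]
    _ = (∏ i : Fin m, l.get i ^ (e i : ℕ)) * ∏ i : Fin m, (if i = j then l.get i else 1) :=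
          Finset.prod_mul_distrib
    _ = s * ∏ i : Fin m, l.get i ^ (e i : ℕ) := by
          rw [Finset.prod_ite_eq' Finset.univ j (fun i => l.get i)]
          rw [List.get_eq_getElem] at hj
          simp [hj, mul_comm]
          exact hj
  have hpos : ∀ K, 0 < ((box K).card : ℝ) := by
    intro K
    exact_mod_cast Finset.card_pos.2 ⟨1, hone K⟩
  by_cases hfound : ∃ K, ((box (K+1)).card : ℝ) ≤ (1+ε) * (box K).card
  · obtain ⟨K, hK⟩ := hfound
    refine ⟨box K, ⟨1, hone K⟩, ?_⟩
    intro s hs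
    have hsub : ((box K).image fun g => s * g) \ box K ⊆ box (K+1) \ box K := by
      intro x hx
      rcases Finset.mem_sdiff.1 hx with ⟨hx1, hx2⟩
      obtain ⟨y, hy, rfl⟩ := Finset.mem_image.1 hx1
      exact Finset.mem_sdiff.2 ⟨hstep s hs K y hy, hx2⟩
    have hcards : ((box K).card : ℝ) ≤ (box (K+1)).card := by
      exact_mod_cast Finset.card_le_card (hmono K)
    calc (((((box K).image fun g => s * g) \ box K)).card : ℝ)
        ≤ ((box (K+1) \ box K).card : ℝ) := by
          exact_mod_cast Finset.card_le_card hsub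
    _ = ((box (K+1)).card : ℝ) - (box K).card := by
          rw [Finset.card_sdiff_of_subset (hmono K)]
          push_cast [Finset.card_le_card (hmono K)]
          ring
    _ ≤ ε * (box K).card := by linarith
  · push_neg at hfound
    exfalso
    have hgeo : ∀ K, ((1+ε)^K : ℝ) ≤ (box K).card := by
      intro K
      induction K with
      | zero => simpa using (hpos 0)
      | succ n ih =>
          have h2 := hfound n
          have h3 : ((1+ε) : ℝ) * (1+ε)^n ≤ (1+ε) * (box n).card :=
            mul_le_mul_of_nonneg_left ih (by linarith)
          calc ((1+ε)^(n+1) : ℝ) = (1+ε) * (1+ε)^n := by ring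
          _ ≤ (1+ε) * (box n).card := h3
          _ ≤ ((box (n+1)).card : ℝ) := le_of_lt h2
    have h1 : (1:ℝ) < 1 + ε := by linarith
    have htend := tendsto_pow_const_div_const_pow_of_one_lt m h1
    have hlt : (0:ℝ) < 1/(1+ε) := by positivity
    have hev : ∀ᶠ (n:ℕ) in atTop, ((n:ℝ)^m / (1+ε)^n) < 1/(1+ε) := by
      have := htend.eventually_lt_const hlt
      exact this
    obtain ⟨n, hn, hn1⟩ := (hev.and (eventually_ge_atTop 1)).exists
    obtain ⟨K, rfl⟩ : ∃ K, n = K + 1 := ⟨n - 1, by omega⟩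
    have hrpos : (0:ℝ) < (1+ε)^(K+1) := by positivity
    have hineq : (((K+1):ℝ))^m < (1+ε)^K := by
      have := (div_lt_iff₀ hrpos).1 (by exact_mod_cast hn)
      have hpow : (1/(1+ε)) * (1+ε)^(K+1) = (1+ε)^K := by
        field_simp
        ring
      calc (((K+1):ℝ))^m < 1/(1+ε) * (1+ε)^(K+1) := by
            push_cast at this ⊢
            linarith
      _ = (1+ε)^K := hpow
    have hcardK : ((box K).card : ℝ) ≤ ((K+1):ℝ)^m := by
      exact_mod_cast hcard K
    have := hgeo K
    linarith

theorem isAmenable_of_mulComm {G : Type*} [hG : Group G] (h : ∀ x y : G, x*y = y*x) :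
    Paper.IsAmenable G := by
  letI : CommGroup G := { hG with mul_comm := h }
  exact isAmenable_of_commGroup G


open Finset Filter

lemma card_filter_mul_notmem {H : Type*} [Group H] [DecidableEq H] (A : Finset H) (g : H) :
    (A.filter (fun x => g * x ∉ A)).card = ((A.image (fun x => g * x)) \ A).card := by
  rw [← Finset.card_image_of_injective (A.filter (fun x => g * x ∉ A)) (mul_right_injective g)]
  congr 1
  ext x
  simp only [Finset.mem_image, Finset.mem_filter, Finset.mem_sdiff]
  constructor
  · rintro ⟨y, ⟨hy, hn⟩, rfl⟩; exact ⟨⟨y, hy, rfl⟩, hn⟩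
  · rintro ⟨⟨y, hy, rfl⟩, hn⟩; exact ⟨y, ⟨hy, hn⟩, rfl⟩


theorem isAmenable_of_finitary {G : Type*} [Group G] {X : Type*} (f : G →* Equiv.Perm X)
    (hinj : Function.Injective f)
    (hfin : ∀ g : G, {v : X | f g v ≠ v}.Finite) : Paper.IsAmenable G := by
  classical
  intro T ε hε
  set K := Subgroup.closure (T : Set G) with hK
  set S : Set X := ⋃ t ∈ (T : Set G), {v | f t v ≠ v} with hS
  have hSfin : S.Finite := Set.Finite.biUnion (T.finite_toSet) (fun t _ => hfin t)
  have hfix : ∀ g ∈ K, ∀ v, v ∉ S → f g v = v := by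
    intro g hg
    induction hg using Subgroup.closure_induction with
    | mem x hx =>
        intro v hv
        by_contra hne
        exact hv (Set.mem_biUnion hx hne)
    | one => intro v _; simp
    | mul x y hx hy ihx ihy =>
        intro v hv
        have h1 := ihy v hv
        calc f (x*y) v = f x (f y v) := by rw [map_mul]; rfl
        _ = f x v := by rw [h1]
        _ = v := ihx v hv
    | inv x hx ih =>
        intro v hv
        have h1 : f x v = v := ih v hv
        have h2 : f x⁻¹ (f x v) = v := by
          rw [← Equiv.Perm.mul_apply, ← map_mul]; simp
        rwa [h1] at h2
  have hmaps : ∀ g ∈ K, ∀ v ∈ S, f g v ∈ S := by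
    intro g hg v hv
    by_contra hout
    have h1 : f g⁻¹ (f g v) = f g v := hfix g⁻¹ (K.inv_mem hg) _ hout
    have h2 : f g⁻¹ (f g v) = v := by
      rw [← Equiv.Perm.mul_apply, ← map_mul]; simp
    have h3 : f g v = v := h1.symm.trans h2
    exact hout (by rw [h3]; exact hv)
  haveI : Finite ↥S := hSfin.to_subtype
  let res : ↥K → (↥S → ↥S) := fun g => fun v => ⟨f g v, hmaps g g.2 v v.2⟩
  have hres_inj : Function.Injective res := by
    intro g h hgh
    apply Subtype.ext; apply hinj; apply Equiv.ext
    intro v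
    by_cases hv : v ∈ S
    · have := congrFun hgh ⟨v, hv⟩
      exact Subtype.ext_iff.1 this
    · rw [hfix g g.2 v hv, hfix h h.2 v hv]
  haveI : Finite ↥K := Finite.of_injective res hres_inj
  have hKfin : (K : Set G).Finite := Set.toFinite _
  refine ⟨hKfin.toFinset, ⟨1, by rw [Set.Finite.mem_toFinset]; exact K.one_mem⟩, ?_⟩
  intro s hs
  have hsK : s ∈ K := Subgroup.subset_closure hs
  have himg : (hKfin.toFinset.image fun g => s * g) = hKfin.toFinset := by
    ext x
    simp only [Finset.mem_image, Set.Finite.mem_toFinset]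
    constructor
    · rintro ⟨y, hy, rfl⟩; exact K.mul_mem hsK hy
    · intro hx; exact ⟨s⁻¹ * x, K.mul_mem (K.inv_mem hsK) hx, by group⟩
  rw [himg]
  rw [Finset.sdiff_self]
  simp only [Finset.card_empty, Nat.cast_zero]
  positivity

theorem isAmenable_ext {G : Type*} [Group G] (N : Subgroup G) [N.Normal]
    (hN : Paper.IsAmenable N) (hQ : Paper.IsAmenable (G ⧸ N)) : Paper.IsAmenable G := by
  classical
  intro T ε hε
  have hε2 : 0 < ε/2 := by linarith
  obtain ⟨Fb, hFbne, hFb⟩ := hQ (T.image (QuotientGroup.mk' N)) (ε/2) hε2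
  set σ : G ⧸ N → G := fun q => Quotient.out q with hσ
  have hout : ∀ q : G ⧸ N, (QuotientGroup.mk' N) (σ q) = q := fun q => QuotientGroup.out_eq' q
  set nel : G → G ⧸ N → G :=
    fun t q => (σ ((QuotientGroup.mk' N) t * q))⁻¹ * t * σ q with hneldef
  have hnel : ∀ t q, nel t q ∈ N := by
    intro t q
    have h1 : (QuotientGroup.mk' N) (nel t q) = 1 := by
      rw [hneldef]
      simp only [map_mul, map_inv, hout]
      group
    have h2 : nel t q ∈ (QuotientGroup.mk' N).ker := MonoidHom.mem_ker.2 h1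
    rwa [QuotientGroup.ker_mk' N] at h2
  set TN : Finset ↥N := (T ×ˢ Fb).image
    (fun p => (⟨nel p.1 p.2, hnel p.1 p.2⟩ : ↥N)) with hTN
  obtain ⟨E, hEne, hE⟩ := hN TN (ε/2) hε2
  set F : Finset G := (Fb ×ˢ E).image (fun p => σ p.1 * (p.2 : G)) with hF
  have hmkN : ∀ e : ↥N, (QuotientGroup.mk' N) (e : G) = 1 := by
    intro e
    have h2 : (e : G) ∈ (QuotientGroup.mk' N).ker := by
      rw [QuotientGroup.ker_mk' N]; exact e.2
    exact MonoidHom.mem_ker.1 h2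
  have hFinj : Function.Injective (fun p : (G ⧸ N) × ↥N => σ p.1 * (p.2 : G)) := by
    rintro ⟨q1, e1⟩ ⟨q2, e2⟩ h
    simp only at h
    have h1 : q1 = q2 := by
      have h2 := congrArg (QuotientGroup.mk' N) h
      simpa only [map_mul, hout, hmkN, mul_one] using h2
    subst h1
    have h3 : (e1 : G) = e2 := mul_left_cancel h
    exact Prod.ext rfl (Subtype.ext h3)
  have hFcard : F.card = Fb.card * E.card := by
    rw [hF, Finset.card_image_of_injective _ hFinj, Finset.card_product]
  refine ⟨F, ?_, ?_⟩
  · obtain ⟨q, hq⟩ := hFbne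
    obtain ⟨e, he⟩ := hEne
    exact ⟨σ q * e, Finset.mem_image.2 ⟨(q, e), Finset.mem_product.2 ⟨hq, he⟩, rfl⟩⟩
  intro t ht
  have hkey : ∀ (q : G ⧸ N) (e : ↥N),
      t * (σ q * (e:G)) = σ ((QuotientGroup.mk' N) t * q) * (nel t q * (e:G)) := by
    intro q e
    rw [hneldef]
    group
  set tb : G ⧸ N := (QuotientGroup.mk' N) t with htb
  set P1 : Finset (G ⧸ N) := Fb.filter (fun q => tb * q ∉ Fb) with hP1
  set bad := (F.image fun g => t * g) \ F with hbad
  have hsubset : bad ⊆ ((P1 ×ˢ E).image (fun p => t * (σ p.1 * (p.2 : G)))) ∪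
      (Fb.biUnion (fun q =>
        (E.filter (fun e => (⟨nel t q, hnel t q⟩ : ↥N) * e ∉ E)).image
          (fun e : ↥N => t * (σ q * (e : G))))) := by
    intro x hx
    rcases Finset.mem_sdiff.1 hx with ⟨hx1, hx2⟩
    obtain ⟨y, hy, rfl⟩ := Finset.mem_image.1 hx1
    obtain ⟨⟨q, e⟩, hqe, rfl⟩ := Finset.mem_image.1 hy
    rcases Finset.mem_product.1 hqe with ⟨hq, he⟩
    by_cases hcase : tb * q ∈ Fb
    · -- second component
      have hnotE : (⟨nel t q, hnel t q⟩ : ↥N) * e ∉ E := by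
        intro hmem
        apply hx2
        rw [hkey q e]
        have hpair : ((tb * q, (⟨nel t q, hnel t q⟩ : ↥N) * e) : (G ⧸ N) × ↥N) ∈ Fb ×ˢ E :=
          Finset.mem_product.2 ⟨hcase, hmem⟩
        have hmem2 := Finset.mem_image_of_mem (fun p : (G ⧸ N) × ↥N => σ p.1 * (p.2 : G)) hpair
        rw [hF]
        simpa using hmem2
      have hefil : e ∈ E.filter (fun e => (⟨nel t q, hnel t q⟩ : ↥N) * e ∉ E) :=
        Finset.mem_filter.2 ⟨he, hnotE⟩
      have himg := Finset.mem_image_of_mem (fun e : ↥N => t * (σ q * (e : G))) hefil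
      exact Finset.mem_union_right _ (Finset.mem_biUnion.2 ⟨q, hq, himg⟩)
    · have hpair : ((q, e) : (G ⧸ N) × ↥N) ∈ P1 ×ˢ E :=
        Finset.mem_product.2 ⟨Finset.mem_filter.2 ⟨hq, hcase⟩, he⟩
      exact Finset.mem_union_left _
        (Finset.mem_image_of_mem (fun p : (G ⧸ N) × ↥N => t * (σ p.1 * (p.2 : G))) hpair)
  have hcard1 : ((P1.card : ℝ)) ≤ (ε/2) * Fb.card := by
    have h1 : P1.card = ((Fb.image (fun q => tb * q)) \ Fb).card :=
      card_filter_mul_notmem Fb tb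
    rw [h1]
    have h0 := hFb tb (Finset.mem_image.2 ⟨t, ht, rfl⟩)
    convert h0 using 4
    all_goals
      congr 1
      all_goals
        first
          | rfl
          | exact funext fun a => funext fun b => Subsingleton.elim _ _
  have hcard2 : ∀ q ∈ Fb,
      (((E.filter (fun e => (⟨nel t q, hnel t q⟩ : ↥N) * e ∉ E)).card : ℝ)) ≤ (ε/2) * E.card := by
    intro q hq
    have h1 := card_filter_mul_notmem E (⟨nel t q, hnel t q⟩ : ↥N)
    rw [h1]
    have h0 := hE _ (Finset.mem_image.2 ⟨(t, q), Finset.mem_product.2 ⟨ht, hq⟩, rfl⟩)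
    convert h0 using 4
    all_goals
      congr 1
      all_goals
        first
          | rfl
          | exact funext fun a => funext fun b => Subsingleton.elim _ _
  have hnat : bad.card ≤ P1.card * E.card +
      ∑ q ∈ Fb, (E.filter (fun e => (⟨nel t q, hnel t q⟩ : ↥N) * e ∉ E)).card := by
    refine le_trans (Finset.card_le_card hsubset) (le_trans (Finset.card_union_le _ _) ?_)
    have hn2 : ((P1 ×ˢ E).image (fun p => t * (σ p.1 * (p.2 : G)))).card ≤ P1.card * E.card := by
      calc _ ≤ (P1 ×ˢ E).card := Finset.card_image_le
      _ = P1.card * E.card := Finset.card_product _ _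
    have hn3 : (Fb.biUnion (fun q =>
        (E.filter (fun e => (⟨nel t q, hnel t q⟩ : ↥N) * e ∉ E)).image
          (fun e : ↥N => t * (σ q * (e : G))))).card ≤
        ∑ q ∈ Fb, (E.filter (fun e => (⟨nel t q, hnel t q⟩ : ↥N) * e ∉ E)).card := by
      refine le_trans (Finset.card_biUnion_le) ?_
      exact Finset.sum_le_sum (fun q _ => Finset.card_image_le)
    exact Nat.add_le_add hn2 hn3
  have hsum : (∑ q ∈ Fb, (((E.filter (fun e => (⟨nel t q, hnel t q⟩ : ↥N) * e ∉ E)).card : ℝ)))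
      ≤ (Fb.card : ℝ) * ((ε/2) * E.card) := by
    calc ∑ q ∈ Fb, (((E.filter (fun e => (⟨nel t q, hnel t q⟩ : ↥N) * e ∉ E)).card : ℝ))
        ≤ ∑ _q ∈ Fb, (ε/2) * (E.card : ℝ) := Finset.sum_le_sum (fun q hq => hcard2 q hq)
    _ = (Fb.card : ℝ) * ((ε/2) * E.card) := by rw [Finset.sum_const, nsmul_eq_mul]
  have hb1 : (bad.card : ℝ) ≤ (P1.card : ℝ) * E.card + (Fb.card : ℝ) * ((ε/2) * E.card) := by
    have hreal : (bad.card : ℝ) ≤ (P1.card : ℝ) * E.card +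
        ∑ q ∈ Fb, (((E.filter (fun e => (⟨nel t q, hnel t q⟩ : ↥N) * e ∉ E)).card : ℝ)) := by
      exact_mod_cast hnat
    linarith
  have hEpos : (0:ℝ) ≤ (E.card : ℝ) := Nat.cast_nonneg _
  have hFbpos : (0:ℝ) ≤ (Fb.card : ℝ) := Nat.cast_nonneg _
  calc (bad.card : ℝ) ≤ (P1.card : ℝ) * E.card + (Fb.card : ℝ) * ((ε/2) * E.card) := hb1
  _ ≤ ((ε/2) * Fb.card) * E.card + (Fb.card : ℝ) * ((ε/2) * E.card) := by
      have := mul_le_mul_of_nonneg_right hcard1 hEpos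
      linarith
  _ = ε * (Fb.card * E.card) := by ring
  _ = ε * F.card := by rw [hFcard]; push_cast; ring


end AmenTools

namespace BubbleAux
open Paper

open Paper

variable (a b : ℕ → ℕ)


/-! ### Letters and words -/

def stepsOf : GLetter → ℤ
  | .A => 1
  | .A' => -1
  | _ => 0

def expsum (L : List GLetter) : ℤ := (L.map stepsOf).sum

def invList (L : List GLetter) : List GLetter := (L.map GLetter.inv).reverse

@[simp] lemma expsum_nil : expsum [] = 0 := rfl

@[simp] lemma expsum_cons (γ : GLetter) (L : List GLetter) :
    expsum (γ :: L) = stepsOf γ + expsum L := by simp [expsum]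

lemma expsum_append (P Q : List GLetter) : expsum (P ++ Q) = expsum P + expsum Q := by
  simp [expsum]

@[simp] lemma gletter_inv_inv (γ : GLetter) : γ.inv.inv = γ := by cases γ <;> rfl

lemma stepsOf_inv (γ : GLetter) : stepsOf γ.inv = - stepsOf γ := by cases γ <;> rfl

@[simp] lemma invList_nil : invList [] = [] := rfl

lemma invList_cons (γ : GLetter) (L : List GLetter) :
    invList (γ :: L) = invList L ++ [γ.inv] := by simp [invList]

lemma invList_invList (L : List GLetter) : invList (invList L) = L := by
  simp [invList, List.map_reverse, List.map_map]
  have : (GLetter.inv ∘ GLetter.inv) = id := by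
    funext γ; simp [Function.comp]
  simp [this]

lemma expsum_invList (L : List GLetter) : expsum (invList L) = - expsum L := by
  induction L with
  | nil => simp
  | cons γ L ih =>
    rw [invList_cons, expsum_append, ih, expsum_cons]
    simp only [expsum_nil, stepsOf_inv, add_zero, expsum_cons]
    ring

lemma invList_length (L : List GLetter) : (invList L).length = L.length := by
  simp [invList]

lemma abs_expsum_le (L : List GLetter) : |expsum L| ≤ (L.length : ℤ) := by
  induction L with
  | nil => simp
  | cons γ L ih =>
    rw [expsum_cons]
    have h1 : |stepsOf γ| ≤ 1 := by cases γ <;> simp [stepsOf]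
    calc |stepsOf γ + expsum L| ≤ |stepsOf γ| + |expsum L| := abs_add_le _ _
    _ ≤ 1 + (L.length : ℤ) := add_le_add h1 ih
    _ = ((γ :: L).length : ℤ) := by push_cast [List.length_cons]; ring

variable (a b : ℕ → ℕ)

open scoped commutatorElement

/-- apply a single letter -/
noncomputable def lapp (γ : GLetter) : BubbleVert a b → BubbleVert a b :=
  GLetter.apply (bubAlpha a b) (bubAlphaInv a b) (bubBeta a b) (bubBetaInv a b) γ

@[simp] lemma bubApply_nil (v : BubbleVert a b) : bubApply a b [] v = v := rfl

lemma bubApply_cons (γ : GLetter) (L : List GLetter) (v : BubbleVert a b) :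
    bubApply a b (γ :: L) v = lapp a b γ (bubApply a b L v) := rfl

lemma bubApply_append (P Q : List GLetter) (v : BubbleVert a b) :
    bubApply a b (P ++ Q) v = bubApply a b P (bubApply a b Q v) := by
  induction P with
  | nil => rfl
  | cons γ P ih => simp [bubApply_cons, ih]

@[simp] lemma alphaInv_alpha (v : BubbleVert a b) : bubAlphaInv a b (bubAlpha a b v) = v := by
  show (⟨v.1, v.2.1, v.2.2 + 1 - 1⟩ : BubbleVert a b) = v
  rw [add_sub_cancel_right]
  exact rfl

@[simp] lemma alpha_alphaInv (v : BubbleVert a b) : bubAlpha a b (bubAlphaInv a b v) = v := by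
  show (⟨v.1, v.2.1, v.2.2 - 1 + 1⟩ : BubbleVert a b) = v
  rw [sub_add_cancel]
  exact rfl

/-! ### ZMod helpers -/

lemma cast_bsub2 (hb : ∀ i, 2 ≤ b i) (k : ℕ) : ((b k - 2 : ℕ) : ZMod (b k - 1)) = -1 := by
  have h2 := hb k
  have h3 : (b k - 2) + 1 = b k - 1 := by omega
  have h4 : ((b k - 1 : ℕ) : ZMod (b k - 1)) = 0 := ZMod.natCast_self _
  have h5 : ((b k - 2 : ℕ) : ZMod (b k - 1)) + 1 = 0 := by
    rw [← h4, ← h3]; push_cast; ring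
  exact eq_neg_of_add_eq_zero_left h5

lemma cast_a_ne_zero (k : ℕ) (hak : 1 ≤ a k) :
    ((a k : ℕ) : ZMod (2 * a k)) ≠ 0 := by
  haveI : NeZero (2 * a k) := ⟨by omega⟩
  intro h0
  rw [ZMod.natCast_eq_zero_iff] at h0
  have h1 := Nat.le_of_dvd hak h0
  omega

lemma update_snoc_last {k : ℕ} (w : (i : Fin k) → ZMod (b i.1 - 1)) (x y : ZMod (b k - 1)) :
    Function.update (Fin.snoc w x : (i : Fin (k+1)) → ZMod (b i.1 - 1)) (Fin.last k) y
      = Fin.snoc w y := by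
  funext i
  refine Fin.lastCases ?_ ?_ i
  · simp
  · intro j
    have hne : (Fin.castSucc j) ≠ Fin.last k := (Fin.castSucc_lt_last j).ne
    simp [Function.update_of_ne hne, Fin.snoc_castSucc]

/-! ### β is a bijection (when all `a k ≥ 1`) -/

lemma betaInv_beta (ha1 : ∀ k, 1 ≤ a k) (hb : ∀ i, 2 ≤ b i) (v : BubbleVert a b) :
    bubBetaInv a b (bubBeta a b v) = v := by
  obtain ⟨k, wu⟩ := v
  obtain ⟨w, u⟩ := wu
  cases k with
  | zero =>
    by_cases h : u = ((a 0 : ℕ) : ZMod (2 * a 0)) ∧ u ≠ 0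
    · have h1 : bubBeta a b ⟨0, w, u⟩ = ⟨1, Fin.snoc w 0, 0⟩ := by
        simp only [bubBeta]; erw [if_pos h]
      rw [h1]
      have h2 : bubBetaInv a b ⟨1, Fin.snoc w 0, (0 : ZMod (2 * a 1))⟩
          = ⟨0, Fin.init ((Fin.snoc w 0 : (i : Fin 1) → ZMod (b i.1 - 1))),
              ((a 0 : ℕ) : ZMod (2 * a 0))⟩ := by
        simp only [bubBetaInv]
        erw [if_neg (by simp), if_pos trivial, if_pos (by rfl)]
      rw [h2, Fin.init_snoc, ← h.1]
    · have h1 : bubBeta a b ⟨0, w, u⟩ = ⟨0, w, u⟩ := by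
        simp only [bubBeta]; erw [if_neg h]
      rw [h1]
      simp only [bubBetaInv]; erw [if_neg h]
  | succ k =>
    by_cases h1 : u = ((a (k+1) : ℕ) : ZMod (2 * a (k+1))) ∧ u ≠ 0
    · have e1 : bubBeta a b ⟨k+1, w, u⟩ = ⟨k + 2, Fin.snoc w 0, 0⟩ := by
        simp only [bubBeta]; erw [if_pos h1]
      rw [e1]
      have e2 : bubBetaInv a b ⟨k+2, Fin.snoc w 0, (0 : ZMod (2 * a (k+2)))⟩
          = ⟨k+1, Fin.init ((Fin.snoc w 0 : (i : Fin (k+2)) → ZMod (b i.1 - 1))),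
              ((a (k+1) : ℕ) : ZMod (2 * a (k+1)))⟩ := by
        simp only [bubBetaInv]
        erw [if_neg (by simp), if_pos trivial, if_pos (by simp)]
      rw [e2, Fin.init_snoc, ← h1.1]
    · by_cases h2 : u = 0
      · by_cases h3 : w (Fin.last k) = ((b k - 2 : ℕ) : ZMod (b k - 1))
        · have e1 : bubBeta a b ⟨k+1, w, u⟩ = ⟨k, Fin.init w, ((a k : ℕ) : ZMod (2 * a k))⟩ := by
            simp only [bubBeta]; erw [if_neg h1, if_pos h2, if_pos h3]
          rw [e1]
          cases k with
          | zero =>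
            have e2 : bubBetaInv a b ⟨0, Fin.init w, ((a 0 : ℕ) : ZMod (2 * a 0))⟩
                = ⟨1, Fin.snoc (Fin.init w) ((b 0 - 2 : ℕ) : ZMod (b 0 - 1)), 0⟩ := by
              simp only [bubBetaInv]
              erw [if_pos ⟨trivial, cast_a_ne_zero a 0 (ha1 0)⟩]
            rw [e2, ← h3, Fin.snoc_init_self, h2]
          | succ j =>
            have e2 : bubBetaInv a b ⟨j+1, Fin.init w, ((a (j+1) : ℕ) : ZMod (2 * a (j+1)))⟩
                = ⟨j+2, Fin.snoc (Fin.init w) ((b (j+1) - 2 : ℕ) : ZMod (b (j+1) - 1)), 0⟩ := by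
              simp only [bubBetaInv]
              erw [if_pos ⟨trivial, cast_a_ne_zero a (j+1) (ha1 (j+1))⟩]
            rw [e2, ← h3, Fin.snoc_init_self, h2]
        · have e1 : bubBeta a b ⟨k+1, w, u⟩
              = ⟨k+1, Function.update w (Fin.last k) (w (Fin.last k) + 1), u⟩ := by
            simp only [bubBeta]; erw [if_neg h1, if_pos h2, if_neg h3]
          rw [e1]
          have hne : Function.update w (Fin.last k) (w (Fin.last k) + 1) (Fin.last k) ≠ 0 := by
            rw [Function.update_self]
            intro hzero
            apply h3
            rw [cast_bsub2 b hb k]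
            have : w (Fin.last k) = -1 := by
              have := hzero
              linear_combination this
            exact this
          have e2 : bubBetaInv a b ⟨k+1, Function.update w (Fin.last k) (w (Fin.last k) + 1), u⟩
              = ⟨k+1, Function.update (Function.update w (Fin.last k) (w (Fin.last k) + 1))
                  (Fin.last k)
                  ((Function.update w (Fin.last k) (w (Fin.last k) + 1)) (Fin.last k) - 1), u⟩ := by
            simp only [bubBetaInv]
            erw [if_neg h1, if_pos h2, if_neg hne]
          rw [e2]
          have e3 : Function.update (Function.update w (Fin.last k) (w (Fin.last k) + 1))
              (Fin.last k)
              ((Function.update w (Fin.last k) (w (Fin.last k) + 1)) (Fin.last k) - 1) = w := by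
            rw [Function.update_self, Function.update_idem]
            simp
          rw [e3]
      · have e1 : bubBeta a b ⟨k+1, w, u⟩ = ⟨k+1, w, u⟩ := by
          simp only [bubBeta]; erw [if_neg h1, if_neg h2]
        rw [e1]
        simp only [bubBetaInv]; erw [if_neg h1, if_neg h2]


lemma beta_betaInv (ha1 : ∀ k, 1 ≤ a k) (hb : ∀ i, 2 ≤ b i) (v : BubbleVert a b) :
    bubBeta a b (bubBetaInv a b v) = v := by
  obtain ⟨k, wu⟩ := v
  obtain ⟨w, u⟩ := wu
  cases k with
  | zero =>
    by_cases h : u = ((a 0 : ℕ) : ZMod (2 * a 0)) ∧ u ≠ 0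
    · have h1 : bubBetaInv a b ⟨0, w, u⟩
          = ⟨1, Fin.snoc w ((b 0 - 2 : ℕ) : ZMod (b 0 - 1)), 0⟩ := by
        simp only [bubBetaInv]; erw [if_pos h]
      rw [h1]
      have h2 : bubBeta a b ⟨1, Fin.snoc w ((b 0 - 2 : ℕ) : ZMod (b 0 - 1)), (0 : ZMod (2 * a 1))⟩
          = ⟨0, Fin.init ((Fin.snoc w ((b 0 - 2 : ℕ) : ZMod (b 0 - 1))
              : (i : Fin 1) → ZMod (b i.1 - 1))), ((a 0 : ℕ) : ZMod (2 * a 0))⟩ := by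
        simp only [bubBeta]
        erw [if_neg (by simp), if_pos trivial, if_pos (by simp [Fin.snoc])]
      rw [h2, Fin.init_snoc, ← h.1]
    · have h1 : bubBetaInv a b ⟨0, w, u⟩ = ⟨0, w, u⟩ := by
        simp only [bubBetaInv]; erw [if_neg h]
      rw [h1]
      simp only [bubBeta]; erw [if_neg h]
  | succ k =>
    by_cases h1 : u = ((a (k+1) : ℕ) : ZMod (2 * a (k+1))) ∧ u ≠ 0
    · have e1 : bubBetaInv a b ⟨k+1, w, u⟩
          = ⟨k + 2, Fin.snoc w ((b (k+1) - 2 : ℕ) : ZMod (b (k+1) - 1)), 0⟩ := by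
        simp only [bubBetaInv]; erw [if_pos h1]
      rw [e1]
      have e2 : bubBeta a b ⟨k+2, Fin.snoc w ((b (k+1) - 2 : ℕ) : ZMod (b (k+1) - 1)),
            (0 : ZMod (2 * a (k+2)))⟩
          = ⟨k+1, Fin.init ((Fin.snoc w ((b (k+1) - 2 : ℕ) : ZMod (b (k+1) - 1))
              : (i : Fin (k+2)) → ZMod (b i.1 - 1))), ((a (k+1) : ℕ) : ZMod (2 * a (k+1)))⟩ := by
        simp only [bubBeta]
        erw [if_neg (by simp), if_pos trivial, if_pos (by simp)]
      rw [e2, Fin.init_snoc, ← h1.1]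
    · by_cases h2 : u = 0
      · subst h2
        by_cases h3 : w (Fin.last k) = 0
        · have e1 : bubBetaInv a b ⟨k+1, w, (0 : ZMod (2 * a (k+1)))⟩
              = ⟨k, Fin.init w, ((a k : ℕ) : ZMod (2 * a k))⟩ := by
            simp only [bubBetaInv]; erw [if_neg h1, if_pos trivial, if_pos h3]
          rw [e1]
          cases k with
          | zero =>
            have e2 : bubBeta a b ⟨0, Fin.init w, ((a 0 : ℕ) : ZMod (2 * a 0))⟩
                = ⟨1, Fin.snoc (Fin.init w) 0, 0⟩ := by
              simp only [bubBeta]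
              erw [if_pos ⟨trivial, cast_a_ne_zero a 0 (ha1 0)⟩]
            rw [e2, ← h3, Fin.snoc_init_self]
          | succ j =>
            have e2 : bubBeta a b ⟨j+1, Fin.init w, ((a (j+1) : ℕ) : ZMod (2 * a (j+1)))⟩
                = ⟨j+2, Fin.snoc (Fin.init w) 0, 0⟩ := by
              simp only [bubBeta]
              erw [if_pos ⟨trivial, cast_a_ne_zero a (j+1) (ha1 (j+1))⟩]
            rw [e2, ← h3, Fin.snoc_init_self]
        · have e1 : bubBetaInv a b ⟨k+1, w, (0 : ZMod (2 * a (k+1)))⟩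
              = ⟨k+1, Function.update w (Fin.last k) (w (Fin.last k) - 1), 0⟩ := by
            simp only [bubBetaInv]; erw [if_neg h1, if_pos trivial, if_neg h3]
          rw [e1]
          have hne : Function.update w (Fin.last k) (w (Fin.last k) - 1) (Fin.last k)
              ≠ ((b k - 2 : ℕ) : ZMod (b k - 1)) := by
            rw [Function.update_self, cast_bsub2 b hb k]
            intro hzero
            apply h3
            linear_combination hzero
          have e2 : bubBeta a b ⟨k+1, Function.update w (Fin.last k) (w (Fin.last k) - 1), (0 : ZMod (2 * a (k+1)))⟩
              = ⟨k+1, Function.update (Function.update w (Fin.last k) (w (Fin.last k) - 1))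
                  (Fin.last k)
                  ((Function.update w (Fin.last k) (w (Fin.last k) - 1)) (Fin.last k) + 1), 0⟩ := by
            simp only [bubBeta]
            erw [if_neg h1, if_pos trivial, if_neg hne]
          rw [e2]
          have e3 : Function.update (Function.update w (Fin.last k) (w (Fin.last k) - 1))
              (Fin.last k)
              ((Function.update w (Fin.last k) (w (Fin.last k) - 1)) (Fin.last k) + 1) = w := by
            rw [Function.update_self, Function.update_idem]
            simp
          rw [e3]
      · have e1 : bubBetaInv a b ⟨k+1, w, u⟩ = ⟨k+1, w, u⟩ := by
          simp only [bubBetaInv]; erw [if_neg h1, if_neg h2]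
        rw [e1]
        simp only [bubBeta]; erw [if_neg h1, if_neg h2]

/-! ### word inverses -/

lemma lapp_inv_left (ha1 : ∀ k, 1 ≤ a k) (hb : ∀ i, 2 ≤ b i) (γ : GLetter) (v : BubbleVert a b) :
    lapp a b γ.inv (lapp a b γ v) = v := by
  cases γ
  · exact alphaInv_alpha a b v
  · exact alpha_alphaInv a b v
  · exact betaInv_beta a b ha1 hb v
  · exact beta_betaInv a b ha1 hb v

lemma lapp_inv_right (ha1 : ∀ k, 1 ≤ a k) (hb : ∀ i, 2 ≤ b i) (γ : GLetter) (v : BubbleVert a b) :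
    lapp a b γ (lapp a b γ.inv v) = v := by
  have := lapp_inv_left a b ha1 hb γ.inv v
  rwa [gletter_inv_inv] at this

lemma bubApply_invList_left (ha1 : ∀ k, 1 ≤ a k) (hb : ∀ i, 2 ≤ b i) (L : List GLetter)
    (v : BubbleVert a b) : bubApply a b (invList L) (bubApply a b L v) = v := by
  induction L generalizing v with
  | nil => rfl
  | cons γ L ih =>
    rw [invList_cons, bubApply_cons, bubApply_append]
    have h1 : bubApply a b [γ.inv] (lapp a b γ (bubApply a b L v)) = bubApply a b L v := by
      rw [show bubApply a b [γ.inv] = lapp a b γ.inv from rfl]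
      exact lapp_inv_left a b ha1 hb γ _
    rw [h1, ih]

lemma bubApply_invList_right (ha1 : ∀ k, 1 ≤ a k) (hb : ∀ i, 2 ≤ b i) (L : List GLetter)
    (v : BubbleVert a b) : bubApply a b L (bubApply a b (invList L) v) = v := by
  have := bubApply_invList_left a b ha1 hb (invList L) v
  rwa [invList_invList] at this

lemma bubApply_cancel (ha1 : ∀ k, 1 ≤ a k) (hb : ∀ i, 2 ≤ b i) (L : List GLetter)
    (v : BubbleVert a b) : bubApply a b (L ++ invList L) v = v := by
  rw [bubApply_append]
  exact bubApply_invList_right a b ha1 hb L v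


/-! ### the local star model at a junction -/

def rotF (m : ℕ) : Option (ZMod m) → Option (ZMod m)
  | none => some 0
  | some z => if z = -1 then none else some (z + 1)

def rotFInv (m : ℕ) : Option (ZMod m) → Option (ZMod m)
  | none => some (-1)
  | some z => if z = 0 then none else some (z - 1)

lemma rotFInv_rotF (m : ℕ) (r : Option (ZMod m)) : rotFInv m (rotF m r) = r := by
  match r with
  | none => simp [rotF, rotFInv]
  | some z =>
    by_cases h : z = -1
    · simp [rotF, rotFInv, h]
    · have h2 : z + 1 ≠ 0 := fun hc => h (by linear_combination hc)
      simp [rotF, rotFInv, h, h2]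

lemma rotF_rotFInv (m : ℕ) (r : Option (ZMod m)) : rotF m (rotFInv m r) = r := by
  match r with
  | none => simp [rotF, rotFInv]
  | some z =>
    by_cases h : z = 0
    · simp [rotF, rotFInv, h]
    · have h2 : z - 1 ≠ -1 := fun hc => h (by linear_combination hc)
      simp [rotF, rotFInv, h, h2]

def starRot (m : ℕ) : Equiv.Perm (Option (ZMod m)) :=
  ⟨rotF m, rotFInv m, rotFInv_rotF m, rotF_rotFInv m⟩

@[simp] lemma starRot_apply (m : ℕ) (r : Option (ZMod m)) : starRot m r = rotF m r := rfl

@[simp] lemma starRot_inv_apply (m : ℕ) (r : Option (ZMod m)) :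
    (starRot m)⁻¹ r = rotFInv m r := rfl

/-- vertex of the star at the junction above the level-`j` word `wp`:
`none` is the parent ray (position `a j + h` on the parent bubble), `some z` is the
child ray through letter `z` (position `h` on the child bubble). -/
noncomputable def starVert (j : ℕ) (wp : (i : Fin j) → ZMod (b i.1 - 1)) :
    Option (ZMod (b j - 1)) → ℤ → BubbleVert a b
  | none, h => ⟨j, wp, ((a j : ℕ) : ZMod (2 * a j)) + (h : ZMod (2 * a j))⟩
  | some z, h => ⟨j + 1, Fin.snoc wp z, (h : ZMod (2 * a (j + 1)))⟩

def rotOf : GLetter → ℤ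
  | .B => 1
  | .B' => -1
  | _ => 0

def rotCount : List GLetter → ℤ → ℤ
  | [], _ => 0
  | γ :: L, h => rotCount L h + (if h + expsum L = 0 then rotOf γ else 0)

@[simp] lemma rotCount_nil (h : ℤ) : rotCount [] h = 0 := rfl

lemma rotCount_cons (γ : GLetter) (L : List GLetter) (h : ℤ) :
    rotCount (γ :: L) h = rotCount L h + (if h + expsum L = 0 then rotOf γ else 0) := rfl

lemma rotCount_append (P Q : List GLetter) (h : ℤ) :
    rotCount (P ++ Q) h = rotCount Q h + rotCount P (h + expsum Q) := by
  induction P with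
  | nil => simp
  | cons γ P ih =>
    rw [List.cons_append, rotCount_cons, ih, rotCount_cons]
    have hcond : h + expsum (P ++ Q) = (h + expsum Q) + expsum P := by
      rw [expsum_append]; ring
    rw [hcond]
    ring

/-! ### small-integer casts into `ZMod` -/

lemma intCast_eq_zero_iff_small {m : ℕ} (h : ℤ) (hh : |h| < (m : ℤ)) :
    ((h : ZMod m) = 0) ↔ h = 0 := by
  haveI : NeZero m := ⟨by
    intro h0
    rw [h0] at hh
    simp only [Nat.cast_zero] at hh
    linarith [abs_nonneg h]⟩
  constructor
  · intro h0
    rw [ZMod.intCast_zmod_eq_zero_iff_dvd] at h0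
    exact Int.eq_zero_of_abs_lt_dvd h0 hh
  · rintro rfl; simp

lemma intCast_ne_of_small {m : ℕ} (h1 h2 : ℤ) (hne : h1 ≠ h2) (hh : |h1 - h2| < (m : ℤ)) :
    ((h1 : ZMod m) ≠ (h2 : ZMod m)) := by
  intro hc
  apply hne
  have h3 : ((h1 - h2 : ℤ) : ZMod m) = 0 := by push_cast; rw [hc]; ring
  have h4 := (intCast_eq_zero_iff_small (h1 - h2) hh).1 h3
  omega

lemma intCast_inj_small {m : ℕ} (h1 h2 : ℤ) (hh : |h1 - h2| < (m : ℤ)) :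
    ((h1 : ZMod m) = (h2 : ZMod m)) ↔ h1 = h2 := by
  constructor
  · intro hc
    by_contra hne
    exact intCast_ne_of_small h1 h2 hne hh hc
  · rintro rfl; rfl

/-! ### action of the generators on a star -/

lemma alpha_starVert (j : ℕ) (wp : (i : Fin j) → ZMod (b i.1 - 1))
    (ρ : Option (ZMod (b j - 1))) (h : ℤ) :
    bubAlpha a b (starVert a b j wp ρ h) = starVert a b j wp ρ (h + 1) := by
  cases ρ <;> simp [bubAlpha, starVert] <;> push_cast <;> exact congrArg (Sigma.mk _) (congrArg (Prod.mk _) (by abel))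

lemma alphaInv_starVert (j : ℕ) (wp : (i : Fin j) → ZMod (b i.1 - 1))
    (ρ : Option (ZMod (b j - 1))) (h : ℤ) :
    bubAlphaInv a b (starVert a b j wp ρ h) = starVert a b j wp ρ (h - 1) := by
  cases ρ with
  | none =>
    exact congrArg (fun x => (⟨j, wp, x⟩ : BubbleVert a b))
      (show ((a j : ℕ) : ZMod (2 * a j)) + (h : ZMod (2 * a j)) - 1
        = ((a j : ℕ) : ZMod (2 * a j)) + ((h - 1 : ℤ) : ZMod (2 * a j)) by push_cast; ring)
  | some z =>
    exact congrArg (fun x => (⟨j + 1, Fin.snoc wp z, x⟩ : BubbleVert a b))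
      (show (h : ZMod (2 * a (j + 1))) - 1 = ((h - 1 : ℤ) : ZMod (2 * a (j + 1))) by push_cast; ring)


lemma beta_starVert (ha1 : ∀ k, 1 ≤ a k) (hb : ∀ i, 2 ≤ b i) (j : ℕ)
    (wp : (i : Fin j) → ZMod (b i.1 - 1)) (ρ : Option (ZMod (b j - 1))) (h : ℤ)
    (hhj : |h| + 1 ≤ (a j : ℤ)) (hhj1 : |h| + 1 ≤ (a (j+1) : ℤ)) :
    bubBeta a b (starVert a b j wp ρ h)
      = if h = 0 then starVert a b j wp (starRot (b j - 1) ρ) 0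
        else starVert a b j wp ρ h := by
  obtain ⟨hL, hR⟩ := abs_lt.1 (show |h| < (a j : ℤ) by linarith)
  obtain ⟨hL1, hR1⟩ := abs_lt.1 (show |h| < (a (j+1) : ℤ) by linarith)
  have haj := ha1 j
  have haj1 := ha1 (j+1)
  cases ρ with
  | none =>
    have e0 : ((a j : ℕ) : ZMod (2 * a j)) + (h : ZMod (2 * a j))
        = ((((a j : ℤ) + h) : ℤ) : ZMod (2 * a j)) := by push_cast; ring
    have ecast : ((a j : ℕ) : ZMod (2 * a j)) = (((a j : ℤ)) : ZMod (2 * a j)) := by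
      push_cast; rfl
    have hne0 : ((a j : ℕ) : ZMod (2 * a j)) + (h : ZMod (2 * a j)) ≠ 0 := by
      rw [e0, Ne, intCast_eq_zero_iff_small]
      · intro hcc; omega
      · rw [abs_lt]
        constructor <;> push_cast <;> omega
    have heqaj : (((a j : ℕ) : ZMod (2 * a j)) + (h : ZMod (2 * a j))
        = ((a j : ℕ) : ZMod (2 * a j))) ↔ h = 0 := by
      rw [e0, ecast, intCast_inj_small]
      · constructor
        · intro hcc; omega
        · intro hcc; omega
      · rw [abs_lt]
        constructor <;> push_cast <;> omega
    by_cases hc : h = 0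
    · have hU : ((a j : ℕ) : ZMod (2 * a j)) + (h : ZMod (2 * a j))
          = ((a j : ℕ) : ZMod (2 * a j)) := heqaj.2 hc
      erw [if_pos hc]
      cases j with
      | zero =>
        show bubBeta a b ⟨0, wp, _⟩ = _
        simp only [bubBeta]
        erw [if_pos ⟨hU, hne0⟩]
        have : starRot (b 0 - 1) none = some 0 := rfl
        rw [this]
        simp only [starVert, Int.cast_zero]
        exact rfl
      | succ i =>
        show bubBeta a b ⟨i + 1, wp, _⟩ = _
        simp only [bubBeta]
        erw [if_pos ⟨hU, hne0⟩]
        have : starRot (b (i+1) - 1) none = some 0 := rfl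
        rw [this]
        simp only [starVert, Int.cast_zero]
        exact rfl
    · erw [if_neg hc]
      have hneaj : ¬(((a j : ℕ) : ZMod (2 * a j)) + (h : ZMod (2 * a j))
          = ((a j : ℕ) : ZMod (2 * a j))) := fun hcc => hc (heqaj.1 hcc)
      cases j with
      | zero =>
        show bubBeta a b ⟨0, wp, _⟩ = _
        simp only [bubBeta]
        erw [if_neg (fun hand => hneaj hand.1)]
        rfl
      | succ i =>
        show bubBeta a b ⟨i + 1, wp, _⟩ = _
        simp only [bubBeta]
        erw [if_neg (fun hand => hneaj hand.1), if_neg hne0]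
        rfl
  | some z =>
    have f1 : (h : ZMod (2 * a (j+1))) ≠ ((a (j+1) : ℕ) : ZMod (2 * a (j+1))) := by
      have ecast : ((a (j+1) : ℕ) : ZMod (2 * a (j+1)))
          = (((a (j+1) : ℤ)) : ZMod (2 * a (j+1))) := by push_cast; rfl
      rw [ecast]
      refine intCast_ne_of_small h _ (by omega) ?_
      rw [abs_lt]
      constructor <;> push_cast <;> omega
    have f2 : ((h : ZMod (2 * a (j+1))) = 0) ↔ h = 0 := by
      rw [intCast_eq_zero_iff_small]
      rw [abs_lt]
      constructor <;> push_cast <;> omega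
    by_cases hc : h = 0
    · subst hc
      erw [if_pos rfl]
      have hz0 : ((0 : ℤ) : ZMod (2 * a (j+1))) = 0 := Int.cast_zero
      show bubBeta a b ⟨j + 1, Fin.snoc wp z, _⟩ = _
      simp only [bubBeta, hz0]
      erw [if_neg (by simp), if_pos trivial]
      by_cases hz : z = -1
      · have htest : (Fin.snoc wp z : (i : Fin (j+1)) → ZMod (b i.1 - 1)) (Fin.last j)
            = ((b j - 2 : ℕ) : ZMod (b j - 1)) := by
          rw [Fin.snoc_last, cast_bsub2 b hb j, hz]
        erw [if_pos htest]
        have hrot : starRot (b j - 1) (some z) = none := by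
          simp [starRot, rotF, hz]
        rw [hrot]
        simp only [starVert, Fin.init_snoc, Int.cast_zero, add_zero]
        exact rfl
      · have htest : ¬((Fin.snoc wp z : (i : Fin (j+1)) → ZMod (b i.1 - 1)) (Fin.last j)
            = ((b j - 2 : ℕ) : ZMod (b j - 1))) := by
          rw [Fin.snoc_last, cast_bsub2 b hb j]
          exact hz
        erw [if_neg htest]
        have hrot : starRot (b j - 1) (some z) = some (z + 1) := by
          simp [starRot, rotF, hz]
        rw [hrot]
        simp only [starVert, Fin.snoc_last, update_snoc_last, Int.cast_zero]
        exact rfl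
    · erw [if_neg hc]
      show bubBeta a b ⟨j + 1, Fin.snoc wp z, _⟩ = _
      simp only [bubBeta]
      erw [if_neg (fun hand => f1 hand.1), if_neg (fun hcc => hc (f2.1 hcc))]
      rfl

lemma betaInv_starVert (ha1 : ∀ k, 1 ≤ a k) (hb : ∀ i, 2 ≤ b i) (j : ℕ)
    (wp : (i : Fin j) → ZMod (b i.1 - 1)) (ρ : Option (ZMod (b j - 1))) (h : ℤ)
    (hhj : |h| + 1 ≤ (a j : ℤ)) (hhj1 : |h| + 1 ≤ (a (j+1) : ℤ)) :
    bubBetaInv a b (starVert a b j wp ρ h)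
      = if h = 0 then starVert a b j wp ((starRot (b j - 1))⁻¹ ρ) 0
        else starVert a b j wp ρ h := by
  obtain ⟨hL, hR⟩ := abs_lt.1 (show |h| < (a j : ℤ) by linarith)
  obtain ⟨hL1, hR1⟩ := abs_lt.1 (show |h| < (a (j+1) : ℤ) by linarith)
  have haj := ha1 j
  have haj1 := ha1 (j+1)
  cases ρ with
  | none =>
    have e0 : ((a j : ℕ) : ZMod (2 * a j)) + (h : ZMod (2 * a j))
        = ((((a j : ℤ) + h) : ℤ) : ZMod (2 * a j)) := by push_cast; ring
    have ecast : ((a j : ℕ) : ZMod (2 * a j)) = (((a j : ℤ)) : ZMod (2 * a j)) := by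
      push_cast; rfl
    have hne0 : ((a j : ℕ) : ZMod (2 * a j)) + (h : ZMod (2 * a j)) ≠ 0 := by
      rw [e0, Ne, intCast_eq_zero_iff_small]
      · intro hcc; omega
      · rw [abs_lt]
        constructor <;> push_cast <;> omega
    have heqaj : (((a j : ℕ) : ZMod (2 * a j)) + (h : ZMod (2 * a j))
        = ((a j : ℕ) : ZMod (2 * a j))) ↔ h = 0 := by
      rw [e0, ecast, intCast_inj_small]
      · constructor
        · intro hcc; omega
        · intro hcc; omega
      · rw [abs_lt]
        constructor <;> push_cast <;> omega
    by_cases hc : h = 0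
    · have hU : ((a j : ℕ) : ZMod (2 * a j)) + (h : ZMod (2 * a j))
          = ((a j : ℕ) : ZMod (2 * a j)) := heqaj.2 hc
      erw [if_pos hc]
      have hrot : (starRot (b j - 1))⁻¹ none = some (-1) := by
        simp [rotFInv]
      rw [hrot]
      cases j with
      | zero =>
        show bubBetaInv a b ⟨0, wp, _⟩ = _
        simp only [bubBetaInv]
        erw [if_pos ⟨hU, hne0⟩]
        simp only [starVert, Int.cast_zero, cast_bsub2 b hb 0]
        exact rfl
      | succ i =>
        show bubBetaInv a b ⟨i + 1, wp, _⟩ = _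
        simp only [bubBetaInv]
        erw [if_pos ⟨hU, hne0⟩]
        simp only [starVert, Int.cast_zero, cast_bsub2 b hb (i+1)]
        exact rfl
    · erw [if_neg hc]
      have hneaj : ¬(((a j : ℕ) : ZMod (2 * a j)) + (h : ZMod (2 * a j))
          = ((a j : ℕ) : ZMod (2 * a j))) := fun hcc => hc (heqaj.1 hcc)
      cases j with
      | zero =>
        show bubBetaInv a b ⟨0, wp, _⟩ = _
        simp only [bubBetaInv]
        erw [if_neg (fun hand => hneaj hand.1)]
        rfl
      | succ i =>
        show bubBetaInv a b ⟨i + 1, wp, _⟩ = _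
        simp only [bubBetaInv]
        erw [if_neg (fun hand => hneaj hand.1), if_neg hne0]
        rfl
  | some z =>
    have f1 : (h : ZMod (2 * a (j+1))) ≠ ((a (j+1) : ℕ) : ZMod (2 * a (j+1))) := by
      have ecast : ((a (j+1) : ℕ) : ZMod (2 * a (j+1)))
          = (((a (j+1) : ℤ)) : ZMod (2 * a (j+1))) := by push_cast; rfl
      rw [ecast]
      refine intCast_ne_of_small h _ (by omega) ?_
      rw [abs_lt]
      constructor <;> push_cast <;> omega
    have f2 : ((h : ZMod (2 * a (j+1))) = 0) ↔ h = 0 := by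
      rw [intCast_eq_zero_iff_small]
      rw [abs_lt]
      constructor <;> push_cast <;> omega
    by_cases hc : h = 0
    · subst hc
      erw [if_pos rfl]
      have hz0 : ((0 : ℤ) : ZMod (2 * a (j+1))) = 0 := Int.cast_zero
      show bubBetaInv a b ⟨j + 1, Fin.snoc wp z, _⟩ = _
      simp only [bubBetaInv, hz0]
      erw [if_neg (by simp), if_pos trivial]
      by_cases hz : z = 0
      · have htest : (Fin.snoc wp z : (i : Fin (j+1)) → ZMod (b i.1 - 1)) (Fin.last j)
            = 0 := by rw [Fin.snoc_last, hz]
        erw [if_pos htest]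
        have hrot : (starRot (b j - 1))⁻¹ (some z) = none := by
          simp [rotFInv, hz]
        rw [hrot]
        simp only [starVert, Fin.init_snoc, Int.cast_zero, add_zero]
        exact rfl
      · have htest : ¬((Fin.snoc wp z : (i : Fin (j+1)) → ZMod (b i.1 - 1)) (Fin.last j)
            = 0) := by rw [Fin.snoc_last]; exact hz
        erw [if_neg htest]
        have hrot : (starRot (b j - 1))⁻¹ (some z) = some (z - 1) := by
          simp [rotFInv, hz]
        rw [hrot]
        simp only [starVert, Fin.snoc_last, update_snoc_last, Int.cast_zero]
        exact rfl
    · erw [if_neg hc]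
      show bubBetaInv a b ⟨j + 1, Fin.snoc wp z, _⟩ = _
      simp only [bubBetaInv]
      erw [if_neg (fun hand => f1 hand.1), if_neg (fun hcc => hc (f2.1 hcc))]
      rfl


/-! ### the star normal form -/

lemma star_apply (ha1 : ∀ k, 1 ≤ a k) (hb : ∀ i, 2 ≤ b i) (j : ℕ)
    (wp : (i : Fin j) → ZMod (b i.1 - 1)) (N : ℕ)
    (hBig : (4*(N:ℤ) + 4) ≤ (a j : ℤ)) (hBig1 : (4*(N:ℤ) + 4) ≤ (a (j+1) : ℤ)) :
    ∀ (L : List GLetter), L.length ≤ N → ∀ (ρ : Option (ZMod (b j - 1))) (h : ℤ),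
      |h| ≤ 3*(N:ℤ) →
    bubApply a b L (starVert a b j wp ρ h)
      = starVert a b j wp ((starRot (b j - 1) ^ (rotCount L h)) ρ) (h + expsum L) := by
  intro L
  induction L with
  | nil =>
    intro _ ρ h _
    simp
  | cons γ L ih =>
    intro hlen ρ h hh
    have hlenL : L.length ≤ N := by
      simp only [List.length_cons] at hlen; omega
    have hlenL' : (L.length : ℤ) ≤ (N : ℤ) - 1 := by
      simp only [List.length_cons] at hlen; push_cast; omega
    rw [bubApply_cons, ih hlenL ρ h hh]
    have habs : |h + expsum L| ≤ 3*(N:ℤ) + ((N:ℤ) - 1) := by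
      calc |h + expsum L| ≤ |h| + |expsum L| := abs_add_le _ _
      _ ≤ 3*(N:ℤ) + L.length := add_le_add hh (abs_expsum_le L)
      _ ≤ _ := by linarith
    have hsj : |h + expsum L| + 1 ≤ (a j : ℤ) := by linarith
    have hsj1 : |h + expsum L| + 1 ≤ (a (j+1) : ℤ) := by linarith
    cases γ with
    | A =>
      rw [show lapp a b GLetter.A = bubAlpha a b from rfl, alpha_starVert]
      have e1 : rotCount (GLetter.A :: L) h = rotCount L h := by
        simp [rotCount_cons, rotOf]
      have e2 : h + expsum (GLetter.A :: L) = (h + expsum L) + 1 := by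
        rw [expsum_cons]; show h + (1 + expsum L) = _; ring
      rw [e1, e2]
    | A' =>
      rw [show lapp a b GLetter.A' = bubAlphaInv a b from rfl, alphaInv_starVert]
      have e1 : rotCount (GLetter.A' :: L) h = rotCount L h := by
        simp [rotCount_cons, rotOf]
      have e2 : h + expsum (GLetter.A' :: L) = (h + expsum L) - 1 := by
        rw [expsum_cons]; show h + (-1 + expsum L) = _; ring
      rw [e1, e2]
    | B =>
      rw [show lapp a b GLetter.B = bubBeta a b from rfl,
        beta_starVert a b ha1 hb j wp _ _ hsj hsj1]
      by_cases hc : h + expsum L = 0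
      · erw [if_pos hc]
        have e1 : rotCount (GLetter.B :: L) h = rotCount L h + 1 := by
          rw [rotCount_cons, if_pos hc]; rfl
        have e2 : h + expsum (GLetter.B :: L) = 0 := by
          rw [expsum_cons]; show h + (0 + expsum L) = 0; rw [zero_add]; exact hc
        have e3 : (starRot (b j - 1) ^ (rotCount L h + 1)) ρ
            = starRot (b j - 1) ((starRot (b j - 1) ^ rotCount L h) ρ) := by
          rw [add_comm, zpow_one_add]; rfl
        rw [e1, e2, e3]
      · erw [if_neg hc]
        have e1 : rotCount (GLetter.B :: L) h = rotCount L h := by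
          rw [rotCount_cons, if_neg hc, add_zero]
        have e2 : h + expsum (GLetter.B :: L) = h + expsum L := by
          rw [expsum_cons]; show h + (0 + expsum L) = _; ring
        rw [e1, e2]
    | B' =>
      rw [show lapp a b GLetter.B' = bubBetaInv a b from rfl,
        betaInv_starVert a b ha1 hb j wp _ _ hsj hsj1]
      by_cases hc : h + expsum L = 0
      · erw [if_pos hc]
        have e1 : rotCount (GLetter.B' :: L) h = rotCount L h - 1 := by
          rw [rotCount_cons, if_pos hc]; rfl
        have e2 : h + expsum (GLetter.B' :: L) = 0 := by
          rw [expsum_cons]; show h + (0 + expsum L) = 0; rw [zero_add]; exact hc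
        have e3 : (starRot (b j - 1) ^ (rotCount L h - 1)) ρ
            = (starRot (b j - 1))⁻¹ ((starRot (b j - 1) ^ rotCount L h) ρ) := by
          rw [sub_eq_neg_add, zpow_add, zpow_neg_one]; rfl
        rw [e1, e2, e3]
      · erw [if_neg hc]
        have e1 : rotCount (GLetter.B' :: L) h = rotCount L h := by
          rw [rotCount_cons, if_neg hc, add_zero]
        have e2 : h + expsum (GLetter.B' :: L) = h + expsum L := by
          rw [expsum_cons]; show h + (0 + expsum L) = _; ring
        rw [e1, e2]

lemma starVert_ray_inj (j : ℕ) (wp : (i : Fin j) → ZMod (b i.1 - 1)) (h : ℤ)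
    {ρ1 ρ2 : Option (ZMod (b j - 1))}
    (heq : starVert a b j wp ρ1 h = starVert a b j wp ρ2 h) : ρ1 = ρ2 := by
  cases ρ1 with
  | none =>
    cases ρ2 with
    | none => rfl
    | some z2 =>
      exfalso
      have := congrArg Sigma.fst heq
      simp only [starVert] at this
      omega
  | some z1 =>
    cases ρ2 with
    | none =>
      exfalso
      have := congrArg Sigma.fst heq
      simp only [starVert] at this
      omega
    | some z2 =>
      have heq' : (⟨j+1, (Fin.snoc wp z1, (h : ZMod (2 * a (j+1))))⟩ : BubbleVert a b)
          = ⟨j+1, (Fin.snoc wp z2, (h : ZMod (2 * a (j+1))))⟩ := heq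
      have h4 := eq_of_heq (Sigma.mk.inj_iff.1 heq').2
      have h5 := congrArg Prod.fst h4
      have h6 := congrFun h5 (Fin.last j)
      simp only [Fin.snoc_last] at h6
      rw [h6]

lemma rot_kill (ha1 : ∀ k, 1 ≤ a k) (hb : ∀ i, 2 ≤ b i) (j : ℕ)
    (wp : (i : Fin j) → ZMod (b i.1 - 1)) (N : ℕ)
    (hBig : (4*(N:ℤ) + 4) ≤ (a j : ℤ)) (hBig1 : (4*(N:ℤ) + 4) ≤ (a (j+1) : ℤ))
    (L : List GLetter) (hlen : (L ++ invList L).length ≤ N) (h : ℤ) (hh : |h| ≤ 3*(N:ℤ)) :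
    starRot (b j - 1) ^ (rotCount (L ++ invList L) h) = 1 := by
  apply Equiv.ext
  intro ρ
  have h1 := star_apply a b ha1 hb j wp N hBig hBig1 (L ++ invList L) hlen ρ h hh
  rw [bubApply_cancel a b ha1 hb L _] at h1
  have h2 : expsum (L ++ invList L) = 0 := by
    rw [expsum_append, expsum_invList]; ring
  rw [h2, add_zero] at h1
  have h3 := starVert_ray_inj a b j wp h h1.symm
  simpa using h3

lemma comm_fixes_star (ha1 : ∀ k, 1 ≤ a k) (hb : ∀ i, 2 ≤ b i) (j : ℕ)
    (wp : (i : Fin j) → ZMod (b i.1 - 1)) (N : ℕ)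
    (hBig : (4*(N:ℤ) + 4) ≤ (a j : ℤ)) (hBig1 : (4*(N:ℤ) + 4) ≤ (a (j+1) : ℤ))
    (L1 L2 : List GLetter) (he1 : expsum L1 = 0) (he2 : expsum L2 = 0)
    (hlen : (L1 ++ L2 ++ invList L1 ++ invList L2).length ≤ N)
    (ρ : Option (ZMod (b j - 1))) (h : ℤ) (hh : |h| ≤ 3*(N:ℤ)) :
    bubApply a b (L1 ++ L2 ++ invList L1 ++ invList L2) (starVert a b j wp ρ h)
      = starVert a b j wp ρ h := by
  have hexpc : expsum (L1 ++ L2 ++ invList L1 ++ invList L2) = 0 := by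
    simp [expsum_append, expsum_invList, he1, he2]
  have h1 := star_apply a b ha1 hb j wp N hBig hBig1 _ hlen ρ h hh
  rw [hexpc, add_zero] at h1
  have ei1 : expsum (invList L1) = 0 := by rw [expsum_invList, he1]; ring
  have ei2 : expsum (invList L2) = 0 := by rw [expsum_invList, he2]; ring
  have hrc : rotCount (L1 ++ L2 ++ invList L1 ++ invList L2) h
      = rotCount (L1 ++ invList L1) h + rotCount (L2 ++ invList L2) h := by
    simp only [rotCount_append, expsum_append, ei1, ei2, he1, he2, add_zero]
    ring
  have hlen1 : (L1 ++ invList L1).length ≤ N := by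
    simp only [List.length_append, invList_length] at hlen ⊢
    omega
  have hlen2 : (L2 ++ invList L2).length ≤ N := by
    simp only [List.length_append, invList_length] at hlen ⊢
    omega
  have k1 := rot_kill a b ha1 hb j wp N hBig hBig1 L1 hlen1 h hh
  have k2 := rot_kill a b ha1 hb j wp N hBig hBig1 L2 hlen2 h hh
  have hone : starRot (b j - 1) ^ (rotCount (L1 ++ L2 ++ invList L1 ++ invList L2) h)
      = 1 := by
    rw [hrc, zpow_add, k1, k2, one_mul]
  rw [hone] at h1
  rw [h1]
  rfl

/-! ### far vertices are translated -/

lemma far_fixed (k : ℕ) (w : (i : Fin k) → ZMod (b i.1 - 1)) (u : ZMod (2 * a k)) :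
    ∀ (L : List GLetter),
      (∀ s : ℤ, |s| ≤ (L.length : ℤ) →
        u + (s : ZMod (2 * a k)) ≠ ((a k : ℕ) : ZMod (2 * a k)) ∧
        u + (s : ZMod (2 * a k)) ≠ 0) →
      bubApply a b L ⟨k, w, u⟩ = ⟨k, w, u + ((expsum L : ℤ) : ZMod (2 * a k))⟩ := by
  intro L
  induction L with
  | nil => intro _; simp; rfl
  | cons γ L ih =>
    intro hfar
    have hfarL : ∀ s : ℤ, |s| ≤ (L.length : ℤ) →
        u + (s : ZMod (2 * a k)) ≠ ((a k : ℕ) : ZMod (2 * a k)) ∧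
        u + (s : ZMod (2 * a k)) ≠ 0 := by
      intro s hs
      refine hfar s ?_
      simp only [List.length_cons]
      push_cast
      linarith
    erw [bubApply_cons, ih hfarL]
    obtain ⟨hne1, hne2⟩ := hfar (expsum L) (by
      have := abs_expsum_le L
      simp only [List.length_cons]
      push_cast
      linarith)
    cases γ with
    | A =>
      show bubAlpha a b _ = _
      simp only [bubAlpha]
      have e : (u + ((expsum L : ℤ) : ZMod (2 * a k))) + 1
          = u + ((expsum (GLetter.A :: L) : ℤ) : ZMod (2 * a k)) := by
        rw [expsum_cons]
        show _ = u + (((1 + expsum L : ℤ)) : ZMod (2 * a k))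
        push_cast
        ring
      rw [e]
    | A' =>
      show bubAlphaInv a b _ = _
      simp only [bubAlphaInv]
      have e : (u + ((expsum L : ℤ) : ZMod (2 * a k))) - 1
          = u + ((expsum (GLetter.A' :: L) : ℤ) : ZMod (2 * a k)) := by
        rw [expsum_cons]
        show _ = u + (((-1 + expsum L : ℤ)) : ZMod (2 * a k))
        push_cast
        ring
      rw [e]
    | B =>
      show bubBeta a b _ = _
      have e : ((expsum (GLetter.B :: L) : ℤ) : ZMod (2 * a k))
          = ((expsum L : ℤ) : ZMod (2 * a k)) := by
        rw [expsum_cons]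
        show (((0 + expsum L : ℤ)) : ZMod (2 * a k)) = _
        push_cast
        ring
      rw [e]
      cases k with
      | zero =>
        simp only [bubBeta]
        erw [if_neg (fun hand => hne1 hand.1)]
      | succ i =>
        simp only [bubBeta]
        erw [if_neg (fun hand => hne1 hand.1), if_neg hne2]
    | B' =>
      show bubBetaInv a b _ = _
      have e : ((expsum (GLetter.B' :: L) : ℤ) : ZMod (2 * a k))
          = ((expsum L : ℤ) : ZMod (2 * a k)) := by
        rw [expsum_cons]
        show (((0 + expsum L : ℤ)) : ZMod (2 * a k)) = _
        push_cast
        ring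
      rw [e]
      cases k with
      | zero =>
        simp only [bubBetaInv]
        erw [if_neg (fun hand => hne1 hand.1)]
      | succ i =>
        simp only [bubBetaInv]
        erw [if_neg (fun hand => hne1 hand.1), if_neg hne2]

/-! ### low levels are finite -/

lemma finite_low (ha1 : ∀ k, 1 ≤ a k) (hb : ∀ i, 2 ≤ b i) (K : ℕ) :
    {v : BubbleVert a b | v.1 ≤ K}.Finite := by
  have hsub : {v : BubbleVert a b | v.1 ≤ K} ⊆
      ⋃ (k : Fin (K+1)), (fun p : ((i : Fin k.1) → ZMod (b i.1 - 1)) × ZMod (2 * a k.1) =>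
        (⟨k.1, p⟩ : BubbleVert a b)) '' Set.univ := by
    rintro ⟨k, p⟩ hv
    change k ≤ K at hv
    exact Set.mem_iUnion.2 ⟨⟨k, Nat.lt_succ_of_le hv⟩, ⟨p, Set.mem_univ _, rfl⟩⟩
  refine Set.Finite.subset (Set.finite_iUnion fun k => ?_) hsub
  haveI h1 : ∀ i : Fin k.1, Finite (ZMod (b i.1 - 1)) := by
    intro i
    haveI : NeZero (b i.1 - 1) := ⟨by have := hb i.1; omega⟩
    infer_instance
  haveI h2 : Finite (ZMod (2 * a k.1)) := by
    haveI : NeZero (2 * a k.1) := ⟨by have := ha1 k.1; omega⟩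
    infer_instance
  exact Set.Finite.image _ Set.finite_univ

/-! ### the key lemma: commutators of zero-exponent words are finitary -/

lemma key_finitary (ha1 : ∀ k, 1 ≤ a k) (hb : ∀ i, 2 ≤ b i)
    (ha : Filter.Tendsto a Filter.atTop Filter.atTop)
    (L1 L2 : List GLetter) (he1 : expsum L1 = 0) (he2 : expsum L2 = 0) :
    {v : BubbleVert a b |
      bubApply a b (L1 ++ L2 ++ invList L1 ++ invList L2) v ≠ v}.Finite := by
  classical
  set Lc := L1 ++ L2 ++ invList L1 ++ invList L2 with hLc
  set N := Lc.length with hN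
  have hexpc : expsum Lc = 0 := by
    simp [hLc, expsum_append, expsum_invList, he1, he2]
  obtain ⟨K, hK⟩ := Filter.eventually_atTop.1 (Filter.tendsto_atTop.1 ha (4*N+4))
  have hak : ∀ m, K ≤ m → (4*(N:ℤ)+4) ≤ (a m : ℤ) := by
    intro m hm
    have := hK m hm
    push_cast
    omega
  have hfix : ∀ (k : ℕ) (w : (i : Fin k) → ZMod (b i.1 - 1)) (u : ZMod (2 * a k)),
      K < k → bubApply a b Lc ⟨k, w, u⟩ = ⟨k, w, u⟩ := by
    intro k w u hk
    by_cases hD1 : ∃ h : ℤ, |h| ≤ 3*(N:ℤ) ∧ u = (h : ZMod (2 * a k))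
    · obtain ⟨h, hh, hu⟩ := hD1
      obtain ⟨k', rfl⟩ : ∃ k', k = k' + 1 := ⟨k - 1, by omega⟩
      have hv : starVert a b k' (Fin.init w) (some (w (Fin.last k'))) h = ⟨k'+1, w, u⟩ := by
        show (⟨k'+1, (Fin.snoc (Fin.init w) (w (Fin.last k')),
          (h : ZMod (2 * a (k'+1))))⟩ : BubbleVert a b) = _
        rw [Fin.snoc_init_self, ← hu]
      rw [← hv]
      exact comm_fixes_star a b ha1 hb k' (Fin.init w) N
        (hak k' (by omega)) (hak (k'+1) (by omega)) L1 L2 he1 he2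
        (Nat.le_of_eq hN.symm) _ h hh
    · by_cases hD2 : ∃ t : ℤ, |t| ≤ 3*(N:ℤ) ∧
          u = ((a k : ℕ) : ZMod (2 * a k)) + (t : ZMod (2 * a k))
      · obtain ⟨t, ht, hu⟩ := hD2
        have hv : starVert a b k w none t = ⟨k, w, u⟩ := by
          show (⟨k, (w, ((a k : ℕ) : ZMod (2 * a k)) + (t : ZMod (2 * a k)))⟩
            : BubbleVert a b) = _
          rw [← hu]
        rw [← hv]
        exact comm_fixes_star a b ha1 hb k w N
          (hak k (by omega)) (hak (k+1) (by omega)) L1 L2 he1 he2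
          (Nat.le_of_eq hN.symm) none t ht
      · have hNge : (Lc.length : ℤ) ≤ 3*(N:ℤ) := by
          rw [hN]
          push_cast
          omega
        have hfar : ∀ s : ℤ, |s| ≤ (Lc.length : ℤ) →
            u + (s : ZMod (2 * a k)) ≠ ((a k : ℕ) : ZMod (2 * a k)) ∧
            u + (s : ZMod (2 * a k)) ≠ 0 := by
          intro s hs
          constructor
          · intro hcc
            apply hD2
            refine ⟨-s, by rw [abs_neg]; linarith, ?_⟩
            push_cast
            linear_combination hcc
          · intro hcc
            apply hD1
            refine ⟨-s, by rw [abs_neg]; linarith, ?_⟩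
            push_cast
            linear_combination hcc
        have hff := far_fixed a b k w u Lc hfar
        rw [hexpc] at hff
        simpa using hff
  refine Set.Finite.subset (finite_low a b ha1 hb K) ?_
  rintro ⟨k, w, u⟩ hv
  change bubApply a b Lc _ ≠ _ at hv
  change k ≤ K
  by_contra hgt
  push_neg at hgt
  exact hv (hfix k w u hgt)


/-! ### words for group elements -/

lemma word_inv (ha1 : ∀ k, 1 ≤ a k) (hb : ∀ i, 2 ≤ b i)
    (g : Equiv.Perm (BubbleVert a b)) (L : List GLetter)
    (hL : ∀ v, g v = bubApply a b L v) :
    ∀ v, g⁻¹ v = bubApply a b (invList L) v := by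
  intro v
  apply g.injective
  have h1 : g (bubApply a b (invList L) v) = v := by
    rw [hL, bubApply_invList_right a b ha1 hb]
  rw [h1, (show g (g⁻¹ v) = v from Equiv.apply_symm_apply g v)]

lemma exists_word_gen (ha1 : ∀ k, 1 ≤ a k) (hb : ∀ i, 2 ≤ b i)
    (π : Equiv.Perm (BubbleVert a b)) (hπ : π ∈ bubGens a b) :
    ∃ L : List GLetter, ∀ v, π v = bubApply a b L v := by
  rcases hπ with h | h | h | h
  · exact ⟨[GLetter.A], fun v => congrFun h v⟩
  · exact ⟨[GLetter.B], fun v => congrFun h v⟩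
  · refine ⟨[GLetter.A'], fun v => ?_⟩
    apply (π⁻¹ : Equiv.Perm _).injective
    rw [(show π⁻¹ (π v) = v from Equiv.symm_apply_apply π v), congrFun h]
    exact (alpha_alphaInv a b v).symm
  · refine ⟨[GLetter.B'], fun v => ?_⟩
    apply (π⁻¹ : Equiv.Perm _).injective
    rw [(show π⁻¹ (π v) = v from Equiv.symm_apply_apply π v), congrFun h]
    exact (beta_betaInv a b ha1 hb v).symm

lemma word_of_mem (ha1 : ∀ k, 1 ≤ a k) (hb : ∀ i, 2 ≤ b i)
    (g : Equiv.Perm (BubbleVert a b)) (hg : g ∈ BubbleGroup a b) :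
    ∃ L : List GLetter, ∀ v, g v = bubApply a b L v := by
  induction hg using Subgroup.closure_induction with
  | mem π hπ => exact exists_word_gen a b ha1 hb π hπ
  | one => exact ⟨[], fun v => rfl⟩
  | mul x y hx hy ihx ihy =>
    obtain ⟨Lx, hLx⟩ := ihx
    obtain ⟨Ly, hLy⟩ := ihy
    refine ⟨Lx ++ Ly, fun v => ?_⟩
    rw [bubApply_append, ← hLy v, ← hLx (y v)]
    rfl
  | inv x hx ihx =>
    obtain ⟨L, hL⟩ := ihx
    exact ⟨invList L, word_inv a b ha1 hb x L hL⟩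

lemma comm_word (ha1 : ∀ k, 1 ≤ a k) (hb : ∀ i, 2 ≤ b i)
    (g1 g2 : Equiv.Perm (BubbleVert a b)) (L1 L2 : List GLetter)
    (h1 : ∀ v, g1 v = bubApply a b L1 v) (h2 : ∀ v, g2 v = bubApply a b L2 v) :
    ∀ v, (g1 * g2 * g1⁻¹ * g2⁻¹) v
      = bubApply a b (L1 ++ L2 ++ invList L1 ++ invList L2) v := by
  intro v
  have hi1 := word_inv a b ha1 hb g1 L1 h1
  have hi2 := word_inv a b ha1 hb g2 L2 h2
  calc (g1 * g2 * g1⁻¹ * g2⁻¹) v = g1 (g2 (g1⁻¹ (g2⁻¹ v))) := rfl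
  _ = bubApply a b (L1 ++ L2 ++ invList L1 ++ invList L2) v := by
      rw [hi2, hi1, h2, h1, ← bubApply_append, ← bubApply_append, ← bubApply_append]

lemma exists_word_zero (ha1 : ∀ k, 1 ≤ a k) (hb : ∀ i, 2 ≤ b i)
    (x : ↥(BubbleGroup a b)) (hx : x ∈ commutator ↥(BubbleGroup a b)) :
    ∃ L : List GLetter, expsum L = 0 ∧
      ∀ v, (x : Equiv.Perm (BubbleVert a b)) v = bubApply a b L v := by
  rw [commutator_def, Subgroup.commutator_def] at hx
  induction hx using Subgroup.closure_induction with
  | mem g hg =>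
    obtain ⟨g1, -, g2, -, rfl⟩ := hg
    obtain ⟨L1, hL1⟩ := word_of_mem a b ha1 hb (g1 : Equiv.Perm _) g1.2
    obtain ⟨L2, hL2⟩ := word_of_mem a b ha1 hb (g2 : Equiv.Perm _) g2.2
    refine ⟨L1 ++ L2 ++ invList L1 ++ invList L2, ?_, ?_⟩
    · simp only [expsum_append, expsum_invList]
      ring
    · intro v
      have hco : ((⁅g1, g2⁆ : ↥(BubbleGroup a b)) : Equiv.Perm (BubbleVert a b))
          = (g1 : Equiv.Perm _) * (g2 : Equiv.Perm _) * (g1 : Equiv.Perm _)⁻¹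
            * (g2 : Equiv.Perm _)⁻¹ := by
        simp [commutatorElement_def]
      rw [hco]
      exact comm_word a b ha1 hb _ _ L1 L2 hL1 hL2 v
  | one => exact ⟨[], rfl, fun v => by simp⟩
  | mul x y hx hy ihx ihy =>
    obtain ⟨Lx, hex, hLx⟩ := ihx
    obtain ⟨Ly, hey, hLy⟩ := ihy
    refine ⟨Lx ++ Ly, by rw [expsum_append, hex, hey]; ring, fun v => ?_⟩
    rw [bubApply_append, ← hLy v, ← hLx]
    simp
  | inv x hx ihx =>
    obtain ⟨L, hL, hw⟩ := ihx
    refine ⟨invList L, by rw [expsum_invList, hL]; ring, fun v => ?_⟩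
    have := word_inv a b ha1 hb (x : Equiv.Perm _) L hw v
    simpa using this

/-! ### second commutators are finitary -/

lemma fin_of_comm2 (ha1 : ∀ k, 1 ≤ a k) (hb : ∀ i, 2 ≤ b i)
    (ha : Filter.Tendsto a Filter.atTop Filter.atTop)
    (h : ↥(commutator ↥(BubbleGroup a b)))
    (hh : h ∈ commutator ↥(commutator ↥(BubbleGroup a b))) :
    {v : BubbleVert a b |
      (((h : ↥(BubbleGroup a b)) : Equiv.Perm (BubbleVert a b))) v ≠ v}.Finite := by
  rw [show commutator ↥(commutator ↥(BubbleGroup a b))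
      = ⁅(⊤ : Subgroup ↥(commutator ↥(BubbleGroup a b))), ⊤⁆ from commutator_def _,
    Subgroup.commutator_def] at hh
  induction hh using Subgroup.closure_induction with
  | mem g hg =>
    obtain ⟨p, -, q, -, rfl⟩ := hg
    obtain ⟨L1, he1, hw1⟩ := exists_word_zero a b ha1 hb (p : ↥(BubbleGroup a b)) p.2
    obtain ⟨L2, he2, hw2⟩ := exists_word_zero a b ha1 hb (q : ↥(BubbleGroup a b)) q.2
    refine Set.Finite.subset (key_finitary a b ha1 hb ha L1 L2 he1 he2) ?_
    intro v hv
    simp only [Set.mem_setOf_eq] at hv ⊢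
    intro hcc
    apply hv
    have hco : (((⁅p, q⁆ : ↥(commutator ↥(BubbleGroup a b))) : ↥(BubbleGroup a b))
          : Equiv.Perm (BubbleVert a b))
        = ((p : ↥(BubbleGroup a b)) : Equiv.Perm _)
          * ((q : ↥(BubbleGroup a b)) : Equiv.Perm _)
          * ((p : ↥(BubbleGroup a b)) : Equiv.Perm _)⁻¹
          * ((q : ↥(BubbleGroup a b)) : Equiv.Perm _)⁻¹ := by
      simp [commutatorElement_def]
    rw [hco, comm_word a b ha1 hb _ _ L1 L2 hw1 hw2 v]
    exact hcc
  | one =>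
    refine Set.Finite.subset Set.finite_empty ?_
    intro v hv
    simp only [Set.mem_setOf_eq] at hv
    exfalso
    apply hv
    simp
  | mul x y hx hy ihx ihy =>
    refine Set.Finite.subset (ihx.union ihy) ?_
    intro v hv
    simp only [Set.mem_setOf_eq, Set.mem_union] at hv ⊢
    by_contra hcon
    push_neg at hcon
    obtain ⟨hfx, hfy⟩ := hcon
    apply hv
    have : (((x * y : ↥(commutator ↥(BubbleGroup a b))) : ↥(BubbleGroup a b))
        : Equiv.Perm (BubbleVert a b)) v
        = ((x : ↥(BubbleGroup a b)) : Equiv.Perm (BubbleVert a b))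
          (((y : ↥(BubbleGroup a b)) : Equiv.Perm (BubbleVert a b)) v) := by
      simp
    rw [this, hfy, hfx]
  | inv x hx ihx =>
    refine Set.Finite.subset ihx ?_
    intro v hv
    simp only [Set.mem_setOf_eq] at hv ⊢
    intro hcc
    apply hv
    have h1 : (((x⁻¹ : ↥(commutator ↥(BubbleGroup a b))) : ↥(BubbleGroup a b))
        : Equiv.Perm (BubbleVert a b))
        = (((x : ↥(BubbleGroup a b)) : Equiv.Perm (BubbleVert a b)))⁻¹ := by
      simp
    rw [h1, ← hcc, Equiv.Perm.coe_inv, Equiv.symm_apply_apply]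
    exact hcc.symm

/-! ### the degenerate case: some `a k = 0` -/

lemma beta_not_injective (hb : ∀ i, 2 ≤ b i) (h0 : ∃ k, a k = 0) :
    ¬ Function.Injective (bubBeta a b) := by
  classical
  obtain ⟨k0, hk0, hmin⟩ : ∃ k0, a k0 = 0 ∧ ∀ j < k0, 1 ≤ a j := by
    refine ⟨Nat.find h0, Nat.find_spec h0, ?_⟩
    intro j hj
    have := Nat.find_min h0 hj
    omega
  intro hinj
  cases k0 with
  | zero =>
    set w1 : (i : Fin 1) → ZMod (b i.1 - 1) :=
      Fin.snoc (fun i : Fin 0 => i.elim0) ((b 0 - 2 : ℕ) : ZMod (b 0 - 1)) with hw1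
    have e1 : bubBeta a b ⟨1, w1, (0 : ZMod (2 * a 1))⟩
        = ⟨0, Fin.init w1, ((a 0 : ℕ) : ZMod (2 * a 0))⟩ := by
      simp only [bubBeta]
      erw [if_neg (by simp), if_pos trivial, if_pos (by rw [hw1]; exact Fin.snoc_last _ _)]
    have e2 : bubBeta a b ⟨0, Fin.init w1, (0 : ZMod (2 * a 0))⟩
        = ⟨0, Fin.init w1, (0 : ZMod (2 * a 0))⟩ := by
      simp only [bubBeta]
      erw [if_neg (by simp)]
    have e3 : ((a 0 : ℕ) : ZMod (2 * a 0)) = (0 : ZMod (2 * a 0)) := by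
      rw [hk0]; simp
    have heq : bubBeta a b ⟨1, w1, (0 : ZMod (2 * a 1))⟩
        = bubBeta a b ⟨0, Fin.init w1, (0 : ZMod (2 * a 0))⟩ := by
      rw [e1, e2, e3]
    have := hinj heq
    have hfst := congrArg Sigma.fst this
    simp at hfst
  | succ m =>
    set w0 : (i : Fin (m+1)) → ZMod (b i.1 - 1) := fun i => (0 : ZMod (b i.1 - 1)) with hw0
    have e1 : bubBeta a b ⟨m+2, Fin.snoc w0 ((b (m+1) - 2 : ℕ) : ZMod (b (m+1) - 1)),
          (0 : ZMod (2 * a (m+2)))⟩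
        = ⟨m+1, Fin.init ((Fin.snoc w0 ((b (m+1) - 2 : ℕ) : ZMod (b (m+1) - 1))
            : (i : Fin (m+2)) → ZMod (b i.1 - 1))), ((a (m+1) : ℕ) : ZMod (2 * a (m+1)))⟩ := by
      simp only [bubBeta]
      erw [if_neg (by simp), if_pos trivial, if_pos (by simp)]
    have e2 : bubBeta a b ⟨m, Fin.init w0, ((a m : ℕ) : ZMod (2 * a m))⟩
        = ⟨m+1, Fin.snoc (Fin.init w0) 0, (0 : ZMod (2 * a (m+1)))⟩ := by
      cases m with
      | zero =>
        simp only [bubBeta]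
        erw [if_pos ⟨trivial, cast_a_ne_zero a 0 (hmin 0 (by omega))⟩]
      | succ i =>
        simp only [bubBeta]
        erw [if_pos ⟨trivial, cast_a_ne_zero a (i+1) (hmin (i+1) (by omega))⟩]
    have e3 : ((a (m+1) : ℕ) : ZMod (2 * a (m+1))) = (0 : ZMod (2 * a (m+1))) := by
      rw [hk0]; simp
    have e4 : Fin.snoc (Fin.init w0) (0 : ZMod (b m - 1)) = w0 := by
      have h5 : w0 (Fin.last m) = 0 := rfl
      rw [← h5, Fin.snoc_init_self]
    have heq : bubBeta a b ⟨m+2, Fin.snoc w0 ((b (m+1) - 2 : ℕ) : ZMod (b (m+1) - 1)),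
          (0 : ZMod (2 * a (m+2)))⟩
        = bubBeta a b ⟨m, Fin.init w0, ((a m : ℕ) : ZMod (2 * a m))⟩ := by
      rw [e1, e2, Fin.init_snoc, e3, e4]
    have := hinj heq
    have hfst := congrArg Sigma.fst this
    simp at hfst

lemma gens_alpha (hb : ∀ i, 2 ≤ b i) (h0 : ∃ k, a k = 0)
    (π : Equiv.Perm (BubbleVert a b)) (hπ : π ∈ bubGens a b) :
    ⇑π = bubAlpha a b ∨ ⇑π = bubAlphaInv a b := by
  rcases hπ with h | h | h | h
  · left; exact h
  · exfalso
    apply beta_not_injective a b hb h0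
    rw [← h]
    exact π.injective
  · right
    funext v
    apply (π⁻¹ : Equiv.Perm _).injective
    rw [(show π⁻¹ (π v) = v from Equiv.symm_apply_apply π v), congrFun h]
    exact (alpha_alphaInv a b v).symm
  · exfalso
    apply beta_not_injective a b hb h0
    rw [← h]
    exact (π⁻¹ : Equiv.Perm _).injective

lemma closure_comm {P : Type*} [Group P] (S : Set P)
    (hS : ∀ x ∈ S, ∀ y ∈ S, x * y = y * x) :
    ∀ x ∈ Subgroup.closure S, ∀ y ∈ Subgroup.closure S, x * y = y * x := by
  intro x hx
  induction hx using Subgroup.closure_induction with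
  | mem g hg =>
    intro y hy
    induction hy using Subgroup.closure_induction with
    | mem g' hg' => exact hS g hg g' hg'
    | one => simp
    | mul u v hu hv ihu ihv =>
      have hcu : Commute g u := ihu
      have hcv : Commute g v := ihv
      exact (hcu.mul_right hcv).eq
    | inv u hu ihu =>
      have hcu : Commute g u := ihu
      exact hcu.inv_right.eq
  | one => intro y hy; simp
  | mul u v hu hv ihu ihv =>
    intro y hy
    have hcu : Commute u y := ihu y hy
    have hcv : Commute v y := ihv y hy
    exact (hcu.mul_left hcv).eq
  | inv u hu ihu =>
    intro y hy
    have hcu : Commute u y := ihu y hy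
    exact hcu.inv_left.eq

lemma case0_comm (hb : ∀ i, 2 ≤ b i) (h0 : ∃ k, a k = 0) :
    ∀ x y : ↥(BubbleGroup a b), x * y = y * x := by
  have hgen : ∀ π ∈ bubGens a b, ∀ ρ ∈ bubGens a b, π * ρ = ρ * π := by
    intro π hπ ρ hρ
    rcases gens_alpha a b hb h0 π hπ with h1 | h1 <;>
      rcases gens_alpha a b hb h0 ρ hρ with h2 | h2 <;>
      · apply Equiv.ext
        intro v
        rw [Equiv.Perm.mul_apply, Equiv.Perm.mul_apply, h1, h2]
        all_goals
          first
            | rfl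
            | (rw [alpha_alphaInv, alphaInv_alpha])
  intro x y
  have := closure_comm (bubGens a b) hgen x.1 x.2 y.1 y.2
  exact Subtype.ext (by simpa using this)


end BubbleAux

theorem statement10 (a b : ℕ → ℕ)
    (ha : Filter.Tendsto a Filter.atTop Filter.atTop) (hb : ∀ i, 2 ≤ b i) :
    IsAmenable (BubbleGroup a b) := by
  classical
  by_cases ha1 : ∀ k, 1 ≤ a k
  · haveI hn1 : (commutator ↥(BubbleGroup a b)).Normal := by
      rw [commutator_def]; infer_instance
    haveI hn2 : (commutator ↥(commutator ↥(BubbleGroup a b))).Normal := by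
      rw [commutator_def]; infer_instance
    have habel1 : IsAmenable ↥(commutator ↥(commutator ↥(BubbleGroup a b))) := by
      refine AmenTools.isAmenable_of_finitary
        ((BubbleGroup a b).subtype.comp
          (((commutator ↥(BubbleGroup a b)).subtype).comp
            ((commutator ↥(commutator ↥(BubbleGroup a b))).subtype))) ?_ ?_
      · exact (Subgroup.subtype_injective _).comp
          ((Subgroup.subtype_injective _).comp (Subgroup.subtype_injective _))
      · intro g
        exact BubbleAux.fin_of_comm2 a b ha1 hb ha g.1 g.2
    have hH : IsAmenable ↥(commutator ↥(BubbleGroup a b)) := by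
      refine AmenTools.isAmenable_ext
        (commutator ↥(commutator ↥(BubbleGroup a b))) habel1 ?_
      letI : CommGroup (↥(commutator ↥(BubbleGroup a b)) ⧸
          commutator ↥(commutator ↥(BubbleGroup a b))) :=
        Abelianization.commGroup ↥(commutator ↥(BubbleGroup a b))
      exact AmenTools.isAmenable_of_mulComm (fun x y => mul_comm x y)
    refine AmenTools.isAmenable_ext (commutator ↥(BubbleGroup a b)) hH ?_
    letI : CommGroup (↥(BubbleGroup a b) ⧸ commutator ↥(BubbleGroup a b)) :=
      Abelianization.commGroup ↥(BubbleGroup a b)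
    exact AmenTools.isAmenable_of_mulComm (fun x y => mul_comm x y)
  · push_neg at ha1
    obtain ⟨k, hk⟩ := ha1
    exact AmenTools.isAmenable_of_mulComm (BubbleAux.case0_comm a b hb ⟨k, by omega⟩)
end
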